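/- arXiv:2604.19504 — 7 statements merged into one kernel-verified Lean document; each statement's English description precedes it below -/
import Mathlib

section
/- Fix n ≥ 1 and set p = n+1. Define φ : ZMod (n²) → ZMod (n²) by φ(i) = i·p. For t, g ∈ ZMod n, say a position x ∈ ZMod (n²) lies in Block t if ⌊x/n⌋ ≡ t (mod n) (taking the canonical representative of x in {0,…,n²−1}), and lies in Group g if x = φ(gn + i) for some i ∈ {0,…,n−1}. Then for every pair (t,g) ∈ (ZMod n)², there is a unique position f(t,g) ∈ ZMod (n²) lying in both Block t and Group g; explicitly f(t,g) = φ(gn + i) where i ≡ t − g (mod n). Moreover, f : (ZMod n)² → ZMod (n²) is a bijection. -/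
lemma key_val (n a i : ℕ) (hn : 0 < n) (hi : i < n) :
    (((n + 1) * (a * n + i) : ℕ) : ZMod (n ^ 2)).val = ((a + i) % n) * n + i := by
  haveI : NeZero (n ^ 2) := ⟨by positivity⟩
  rw [ZMod.val_natCast]
  have h : a + i = n * ((a + i) / n) + (a + i) % n := (Nat.div_add_mod _ _).symm
  set q := (a + i) / n with hq
  set r := (a + i) % n with hr
  have hrn : r < n := Nat.mod_lt _ hn
  have hid : (n + 1) * (a * n + i) = r * n + i + (a + q) * n ^ 2 := by
    have h1 : (n + 1) * (a * n + i) = a * (n * n) + (a + i) * n + i := by ring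
    rw [h1, h]; ring
  rw [hid, Nat.add_mul_mod_self_right, Nat.mod_eq_of_lt]
  calc r * n + i < r * n + n := by omega
    _ = (r + 1) * n := by ring
    _ ≤ n * n := Nat.mul_le_mul_right n hrn
    _ = n ^ 2 := (sq n).symm

lemma key_div (n r i : ℕ) (hn : 0 < n) (hi : i < n) : (r * n + i) / n = r := by
  rw [add_comm, Nat.add_mul_div_right _ _ hn, Nat.div_eq_of_lt hi, Nat.zero_add]



/-- `x` lies in Block `t`: the quotient of the canonical representative of `x`
upon division by `n` is congruent to `t` mod `n`. -/
def InBlock (n : ℕ) (x : ZMod (n ^ 2)) (t : ZMod n) : Prop :=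
  ((x.val / n : ℕ) : ZMod n) = t

/-- `x` lies in Group `g`: `x = φ(g*n + i)` for some `0 ≤ i < n`,
where `φ(y) = (n+1)·y` in `ZMod (n²)`. -/
def InGroup (n : ℕ) (x : ZMod (n ^ 2)) (g : ZMod n) : Prop :=
  ∃ i : ℕ, i < n ∧ x = (((n + 1) * (g.val * n + i) : ℕ) : ZMod (n ^ 2))

/-- The explicit position map `f(t,g) = φ(g·n + i)` where `i ≡ t - g (mod n)`. -/
def posMap (n : ℕ) (t g : ZMod n) : ZMod (n ^ 2) :=
  (((n + 1) * (g.val * n + (t - g).val) : ℕ) : ZMod (n ^ 2))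

/-- Each pair (Block `t`, Group `g`) contains a unique position, given explicitly
by `f(t,g) = φ(g·n + i)` with `i ≡ t - g (mod n)`; moreover `f` is a bijection. -/
theorem stmt_2 (n : ℕ) (hn : 1 ≤ n) :
    (∀ t g : ZMod n,
      (InBlock n (posMap n t g) t ∧ InGroup n (posMap n t g) g) ∧
      (∀ x : ZMod (n ^ 2), InBlock n x t ∧ InGroup n x g → x = posMap n t g)) ∧
    Function.Bijective (fun tg : ZMod n × ZMod n => posMap n tg.1 tg.2) := by
  have hn0 : 0 < n := hn
  haveI : NeZero n := ⟨by omega⟩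
  haveI : NeZero (n ^ 2) := ⟨by positivity⟩
  have hval : ∀ t g : ZMod n,
      (posMap n t g).val = ((g.val + (t - g).val) % n) * n + (t - g).val :=
    fun t g => key_val n g.val (t - g).val hn0 (t - g).val_lt
  have hblock : ∀ t g : ZMod n, InBlock n (posMap n t g) t := by
    intro t g
    unfold InBlock
    rw [hval, key_div n _ _ hn0 (t - g).val_lt]
    push_cast [ZMod.natCast_mod, ZMod.natCast_val, ZMod.cast_id]
    ring
  have hgroup : ∀ t g : ZMod n, InGroup n (posMap n t g) g :=
    fun t g => ⟨(t - g).val, (t - g).val_lt, rfl⟩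
  have huniq : ∀ (t g : ZMod n) (x : ZMod (n ^ 2)),
      InBlock n x t ∧ InGroup n x g → x = posMap n t g := by
    rintro t g x ⟨hb, i, hi, rfl⟩
    unfold InBlock at hb
    rw [key_val n g.val i hn0 hi, key_div n _ _ hn0 hi] at hb
    have h2 : (i : ZMod n) = t - g := by
      push_cast [ZMod.natCast_mod, ZMod.natCast_val, ZMod.cast_id] at hb
      linear_combination hb
    have hi' : i = (t - g).val := by rw [← h2, ZMod.val_cast_of_lt hi]
    rw [posMap, hi']
  refine ⟨fun t g => ⟨⟨hblock t g, hgroup t g⟩, huniq t g⟩, ?_⟩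
  rw [Fintype.bijective_iff_injective_and_card]
  constructor
  · rintro ⟨t, g⟩ ⟨t', g'⟩ h
    simp only at h
    have hv : (posMap n t g).val = (posMap n t' g').val := by rw [h]
    rw [hval, hval] at hv
    set i := (t - g).val with hidef
    set i' := (t' - g').val with hi'def
    have hi : i < n := (t - g).val_lt
    have hi2 : i' < n := (t' - g').val_lt
    have hii : i = i' := by
      have h1 := congrArg (· % n) hv
      simp only [add_comm _ i, add_comm _ i', Nat.add_mul_mod_self_right,
        Nat.mod_eq_of_lt hi, Nat.mod_eq_of_lt hi2] at h1
      exact h1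
    have hrr : (g.val + i) % n = (g'.val + i') % n := by
      have h3 : ((g.val + i) % n) * n = ((g'.val + i') % n) * n := by omega
      exact Nat.eq_of_mul_eq_mul_right hn0 h3
    have htg : t - g = t' - g' := ZMod.val_injective n (by rw [← hidef, ← hi'def, hii])
    have hcast : (i : ZMod n) = t - g := by
      rw [hidef]; simp [ZMod.natCast_val, ZMod.cast_id]
    have hcast' : (i' : ZMod n) = t' - g' := by
      rw [hi'def]; simp [ZMod.natCast_val, ZMod.cast_id]
    have ht : t = t' := by
      have h4 := congrArg (fun m : ℕ => (m : ZMod n)) hrr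
      push_cast [ZMod.natCast_mod, ZMod.natCast_val, ZMod.cast_id] at h4
      rw [hcast, hcast'] at h4
      linear_combination h4
    have hg : g = g' := by
      have := htg
      rw [ht] at this
      linear_combination -this
    simp [ht, hg]
  · simp [ZMod.card, pow_two]
end

section
/- Two binary words u, v ∈ {0,1}* of equal length are cyclically equalizable if and only if they have the same Hamming weight, i.e., |u|_1 = |v|_1. -/
/-- Interleave insertion strings `ss = [s₀, …, sₙ]` with the letters of `w = [w₀, …, w_{n-1}]`,
producing `s₀ w₀ s₁ w₁ ⋯ s_{n-1} w_{n-1} sₙ`. -/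
def interleave {α : Type*} : List (List α) → List α → List α
  | [], _ => []
  | s :: _, [] => s
  | s :: ss, a :: w => s ++ a :: interleave ss w

/-- `u` and `v` are cyclically equalizable: some simultaneous insertion transforms
them into rotations of each other. -/
def CyclicallyEqualizable {α : Type*} (u v : List α) : Prop :=
  ∃ ss : List (List α), ss.length = u.length + 1 ∧
    (interleave ss u).IsRotated (interleave ss v)

/-- Chains of single-position updates: `Eq2 u v W Wf` means that starting from the
state word `W` one can process the letters of `u`,`v` in order, each step reading
`uᵢ` at some position of the current state and writing `vᵢ` there, ending at `Wf`. -/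
inductive Eq2 : List (Fin 2) → List (Fin 2) → List (Fin 2) → List (Fin 2) → Prop where
  | nil (W : List (Fin 2)) : Eq2 [] [] W W
  | cons (a b : Fin 2) (u v W Wf : List (Fin 2)) (c : ℕ) (hc : c < W.length)
      (ha : W[c] = a) (h : Eq2 u v (W.set c b) Wf) : Eq2 (a :: u) (b :: v) W Wf

lemma getElem_append_cons {α : Type*} (P Q : List α) (x : α) :
    (P ++ x :: Q)[P.length]'(by simp) = x := by
  induction P with
  | nil => rfl
  | cons p P ih => simpa using ih

lemma set_append_cons {α : Type*} (P Q : List α) (x y : α) :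
    (P ++ x :: Q).set P.length y = P ++ y :: Q := by
  induction P with
  | nil => rfl
  | cons p P ih => simp only [List.length_cons, List.cons_append, List.set_cons_succ, ih]

lemma fin2 (x : Fin 2) : x = 0 ∨ x = 1 := by
  fin_cases x
  · exact Or.inl rfl
  · exact Or.inr rfl

lemma key {u v W Wf : List (Fin 2)} (h : Eq2 u v W Wf) :
    ∀ D : List (Fin 2), ∃ ss X, ss.length = u.length + 1 ∧
      interleave ss u = D ++ W ++ X ∧ interleave ss v = D ++ X ++ Wf := by
  induction h with
  | nil W =>
    intro D
    exact ⟨[D ++ W], [], rfl, by simp [interleave], by simp [interleave]⟩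
  | cons a b u v W Wf c hc ha h ih =>
    intro D
    obtain ⟨T, E, hW, hW'⟩ : ∃ T E, W = T ++ a :: E ∧ W.set c b = T ++ b :: E := by
      refine ⟨W.take c, W.drop (c + 1), ?_, List.set_eq_take_cons_drop b hc⟩
      conv_lhs => rw [← List.take_append_drop c W, List.drop_eq_getElem_cons hc, ha]
    obtain ⟨ss, X, hlen, hu, hv⟩ := ih E
    rw [hW'] at hu
    refine ⟨(D ++ T) :: ss, (T ++ b :: E) ++ X, by simp [hlen], ?_, ?_⟩
    · show (D ++ T) ++ a :: interleave ss u = _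
      rw [hu, hW]
      simp
    · show (D ++ T) ++ b :: interleave ss v = _
      rw [hv]
      simp

/-- The ramp state word `1^e 0^(N-e) 0 1`. -/
def ramp (N e : ℕ) : List (Fin 2) :=
  List.replicate e 1 ++ List.replicate (N - e) 0 ++ [0, 1]

lemma build (u : List (Fin 2)) : ∀ (v : List (Fin 2)), u.length = v.length →
    ∀ e f N, u.length ≤ e → e + v.count 1 ≤ N → e + v.count 1 = f + u.count 1 →
    Eq2 u v (ramp N e) (ramp N f) := by
  induction u with
  | nil =>
    rintro (_ | ⟨b, v⟩) hl e f N h1 h2 h3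
    · simp at h3
      rw [h3]
      exact Eq2.nil _
    · simp at hl
  | cons a u ih =>
    rintro (_ | ⟨b, v⟩) hl e f N h1 h2 h3
    · simp at hl
    · simp only [List.length_cons] at hl h1
      simp only [List.count_cons] at h2 h3
      rcases fin2 a with rfl | rfl <;> rcases fin2 b with rfl | rfl <;>
        simp [List.count_cons] at h2 h3
      -- case a = 0, b = 0
      · have h0 : ramp N e =
            (List.replicate e 1 ++ List.replicate (N - e) 0) ++ (0 : Fin 2) :: [1] := by
          simp [ramp]
        rw [h0]
        refine Eq2.cons _ _ _ _ _ _ (List.replicate e (1 : Fin 2) ++ List.replicate (N - e) 0).length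
          (by simp) (getElem_append_cons (List.replicate e (1 : Fin 2) ++ List.replicate (N - e) 0) [1] 0) ?_
        rw [set_append_cons, ← h0]
        exact ih v (by omega) e f N (by omega) (by omega) (by omega)
      -- case a = 0, b = 1
      · have hlt : e < N := by omega
        have h0 : ramp N e = List.replicate e 1 ++ (0 : Fin 2) ::
            (List.replicate (N - e - 1) 0 ++ [0, 1]) := by
          rw [ramp, show N - e = (N - e - 1) + 1 by omega, List.replicate_succ]
          simp
        have h1' : ramp N (e + 1) = List.replicate e 1 ++ (1 : Fin 2) ::
            (List.replicate (N - e - 1) 0 ++ [0, 1]) := by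
          rw [ramp, show N - (e + 1) = N - e - 1 by omega, List.replicate_succ']
          simp
        rw [h0]
        refine Eq2.cons _ _ _ _ _ _ (List.replicate e (1 : Fin 2)).length
          (by simp) (getElem_append_cons (List.replicate e (1 : Fin 2))
            (List.replicate (N - e - 1) 0 ++ [0, 1]) 0) ?_
        rw [set_append_cons, ← h1']
        exact ih v (by omega) (e + 1) f N (by omega) (by omega) (by omega)
      -- case a = 1, b = 0
      · have h1e : 1 ≤ e := by omega
        have h0 : ramp N e = List.replicate (e - 1) 1 ++ (1 : Fin 2) ::
            (List.replicate (N - e) 0 ++ [0, 1]) := by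
          rw [ramp, show e = (e - 1) + 1 by omega, List.replicate_succ']
          simp [show e - 1 + 1 - (e - 1 + 1) = 0 from by omega,
            show N - (e - 1 + 1) = N - e from by omega]
        have h1' : ramp N (e - 1) = List.replicate (e - 1) 1 ++ (0 : Fin 2) ::
            (List.replicate (N - e) 0 ++ [0, 1]) := by
          rw [ramp, show N - (e - 1) = (N - e) + 1 by omega, List.replicate_succ]
          simp
        rw [h0]
        refine Eq2.cons _ _ _ _ _ _ (List.replicate (e - 1) (1 : Fin 2)).length
          (by simp) (getElem_append_cons (List.replicate (e - 1) (1 : Fin 2))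
            (List.replicate (N - e) 0 ++ [0, 1]) 1) ?_
        rw [set_append_cons, ← h1']
        exact ih v (by omega) (e - 1) f N (by omega) (by omega) (by omega)
      -- case a = 1, b = 1
      · have h0 : ramp N e =
            (List.replicate e 1 ++ List.replicate (N - e) 0 ++ [0]) ++ (1 : Fin 2) :: [] := by
          simp [ramp]
        rw [h0]
        refine Eq2.cons _ _ _ _ _ _
          (List.replicate e (1 : Fin 2) ++ List.replicate (N - e) 0 ++ [(0 : Fin 2)]).length
          (by simp) (getElem_append_cons
            (List.replicate e (1 : Fin 2) ++ List.replicate (N - e) 0 ++ [(0 : Fin 2)]) [] 1) ?_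
        rw [set_append_cons, ← h0]
        exact ih v (by omega) e f N (by omega) (by omega) (by omega)

theorem count_interleave (x : Fin 2) : ∀ (ss : List (List (Fin 2))) (w : List (Fin 2)),
    ss.length = w.length + 1 →
    (interleave ss w).count x = (ss.map (·.count x)).sum + w.count x
  | [s], [], _ => by simp [interleave]
  | s :: s' :: ss, a :: w, h => by
    have := count_interleave x (s' :: ss) w (by simpa using h)
    simp [interleave, List.count_append, List.count_cons, this]
    omega
  | [], w, h => by simp at h
  | [s], a :: w, h => by simp at h
  | s :: s' :: ss, [], h => by simp at h

/-- Two binary words of equal length are cyclically equalizable iff they have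
the same Hamming weight. -/
theorem stmt_7 (u v : List (Fin 2)) (hlen : u.length = v.length) :
    CyclicallyEqualizable u v ↔ u.count 1 = v.count 1 := by
  constructor
  · rintro ⟨ss, hl, hrot⟩
    have hperm := hrot.perm
    have h1 := count_interleave 1 ss u hl
    have h2 := count_interleave 1 ss v (by rw [hl, hlen])
    have := hperm.count_eq 1
    omega
  · intro hc
    have hb := build u v hlen u.length u.length (u.length + v.count 1) le_rfl le_rfl
      (by omega)
    obtain ⟨ss, X, hl, hA, hB⟩ := key hb []
    refine ⟨ss, hl, ?_⟩
    rw [hA, hB]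
    simpa using List.isRotated_append
end

section
/- Let Σ be a finite alphabet and let u, v ∈ Σ* be words of equal length. Then u and v are cyclically equalizable if and only if they have the same Parikh vector (equivalently, v is a permutation of u). -/
/-!
The Parikh vector is invariant: `interleave ss w` is a permutation of `ss.flatten ++ w`, and a
rotation is a permutation.

Conversely write `v = u ∘ σ` for a permutation `σ` of the indices, and let `m = n (n + 2)`.
We build a word `W` of length `n m` whose positions `p = n x + c` form `n` columns `c` of `m`
rows `x`; rotating `W` by `n (n + 1)` moves every column by `n + 1` rows, and since
`(n + 1)² ≡ 1 [MOD m]` the row `x` is reached at time `x (n + 1) mod m`, which swaps the two digits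
of `x = i (n + 1) + r` in base `n + 1`. Each cycle of `σ` lives in the column of a representative
`c`; the letter `u i` with `i = σ^[r] c` is marked at row `i (n + 1) + r`, so the marks increase
with `i` while their times increase with the rank `r` along the cycle. A column shows
`u (σ^[k] c)` after `k` of its marks have passed, so it changes from `u i` to `u (σ i) = v i`
exactly across the mark of `i`, and `W` agrees with its rotation at every unmarked position.
Cutting `W` and its rotation at the marks gives the common insertions.
-/

open scoped List

section

variable {α : Type*}

theorem interleave_perm_flatten_append :
    ∀ (ss : List (List α)) (w : List α), ss.length = w.length + 1 →
      interleave ss w ~ ss.flatten ++ w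
  | [], _, h => by simp at h
  | [s], [], _ => by simp [interleave]
  | _ :: _ :: _, [], h => by simp at h
  | s :: ss, a :: w, h => by
      have ih := interleave_perm_flatten_append ss w (by simpa using h)
      simpa only [interleave, List.flatten_cons, List.append_assoc] using
        ((ih.cons a).trans List.perm_middle.symm).append_left s

theorem CyclicallyEqualizable.perm {u v : List α} (hlen : u.length = v.length)
    (h : CyclicallyEqualizable u v) : u ~ v := by
  obtain ⟨ss, hss, hrot⟩ := h
  refine (List.perm_append_left_iff ss.flatten).mp ?_
  exact (interleave_perm_flatten_append ss u hss).symm.trans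
    (hrot.perm.trans (interleave_perm_flatten_append ss v (hlen ▸ hss)))

theorem List.take_append_cons_drop_of_getElem?_eq {l : List α} {m : ℕ} {a : α}
    (h : l[m]? = some a) : l.take m ++ a :: l.drop (m + 1) = l := by
  obtain ⟨hm, rfl⟩ := List.getElem?_eq_some_iff.mp h
  rw [← List.drop_eq_getElem_cons hm, List.take_append_drop]

theorem exists_interleave_eq {n : ℕ} (W₁ W₂ : List α) (u v : Fin n → α) (q : Fin n → ℕ)
    (hq : StrictMono q) (hu : ∀ i, W₁[q i]? = some (u i)) (hv : ∀ i, W₂[q i]? = some (v i))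
    (hagree : ∀ p, p ∉ Set.range q → W₁[p]? = W₂[p]?) :
    ∃ ss : List (List α), ss.length = n + 1 ∧
      interleave ss (List.ofFn u) = W₁ ∧ interleave ss (List.ofFn v) = W₂ := by
  induction n generalizing W₁ W₂ with
  | zero =>
    obtain rfl : W₁ = W₂ := List.ext_getElem? fun p => hagree p (by simp)
    exact ⟨[W₁], rfl, rfl, rfl⟩
  | succ n ih =>
    set m := q 0
    have hq₀ (i : Fin n) : m < q i.succ := hq (Fin.succ_pos i)
    have hprefix : W₁.take m = W₂.take m := List.ext_getElem? fun p => by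
      rcases lt_or_ge p m with hp | hp
      · rw [List.getElem?_take_of_lt hp, List.getElem?_take_of_lt hp]
        refine hagree p ?_
        rintro ⟨i, rfl⟩
        exact hp.not_ge (hq.monotone (Fin.zero_le i))
      · simp [hp]
    have hshift (i : Fin n) : m + 1 + (q i.succ - (m + 1)) = q i.succ := by
      have := hq₀ i; omega
    obtain ⟨ss, hlen, h₁, h₂⟩ := ih (W₁.drop (m + 1)) (W₂.drop (m + 1)) (fun i => u i.succ)
      (fun i => v i.succ) (fun i => q i.succ - (m + 1))
      (fun i j hij => by have := hq₀ i; have := hq (Fin.succ_lt_succ_iff.2 hij); dsimp only; omega)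
      (fun i => by rw [List.getElem?_drop, hshift, hu])
      (fun i => by rw [List.getElem?_drop, hshift, hv])
      (fun p hp => by
        rw [List.getElem?_drop, List.getElem?_drop]
        refine hagree _ ?_
        rintro ⟨i, hi⟩
        refine Fin.cases (fun h => ?_) (fun j h => hp ⟨j, ?_⟩) i hi
        · dsimp only [m] at h; omega
        · dsimp only; omega)
    refine ⟨W₁.take m :: ss, by simp [hlen], ?_, ?_⟩
    · rw [List.ofFn_succ, interleave, h₁, List.take_append_cons_drop_of_getElem?_eq (hu 0)]
    · rw [List.ofFn_succ, interleave, h₂, hprefix,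
        List.take_append_cons_drop_of_getElem?_eq (hv 0)]

theorem cyclicallyEqualizable_of_periodic {n N k : ℕ} (u v : Fin n → α) (f : ℕ → α)
    (hf : Function.Periodic f N) (q : Fin n → ℕ) (hq : StrictMono q) (hqN : ∀ i, q i < N)
    (hu : ∀ i, f (q i) = u i) (hv : ∀ i, f (q i + k) = v i)
    (hfix : ∀ p < N, p ∉ Set.range q → f (p + k) = f p) :
    CyclicallyEqualizable (List.ofFn u) (List.ofFn v) := by
  set W := List.ofFn fun p : Fin N => f p
  have hW {p : ℕ} (hp : p < N) : W[p]? = some (f p) := by simp [W, hp]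
  have hWk {p : ℕ} (hp : p < N) : (W.rotate k)[p]? = some (f (p + k)) := by
    rw [List.getElem?_rotate (by simpa [W] using hp), List.length_ofFn,
      hW (Nat.mod_lt _ (by omega)), hf.map_mod_nat]
  obtain ⟨ss, hlen, h₁, h₂⟩ := exists_interleave_eq W (W.rotate k) u v q hq
    (fun i => by rw [hW (hqN i), hu]) (fun i => by rw [hWk (hqN i), hv])
    (fun p hp => by
      rcases lt_or_ge p N with hpN | hpN
      · rw [hW hpN, hWk hpN, hfix p hpN hp]
      · simp [W, hpN])
  exact ⟨ss, by simpa using hlen, h₁ ▸ h₂ ▸ ⟨k, rfl⟩⟩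

theorem Fintype.exists_perm_comp_eq_of_card_fiber_eq {ι : Type*} [Fintype ι] [DecidableEq α]
    {a b : ι → α} (h : ∀ c, Finset.card {i | a i = c} = Finset.card {i | b i = c}) :
    ∃ σ : Equiv.Perm ι, a ∘ σ = b :=
  ⟨Equiv.ofFiberEquiv fun c =>
      Fintype.equivOfCardEq (by simpa [Fintype.card_subtype] using (h c).symm),
    funext (Equiv.ofFiberEquiv_map _)⟩

theorem List.card_filter_eq_count_ofFn [DecidableEq α] {n : ℕ} (a : Fin n → α) (c : α) :
    Finset.card {i | a i = c} = (List.ofFn a).count c := by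
  simpa using Fin.card_filter_univ_eq_vector_get_eq_count c (List.Vector.ofFn a)

theorem List.Perm.exists_eq_ofFn_comp [DecidableEq α] {u v : List α} (h : u ~ v) :
    ∃ (n : ℕ) (a : Fin n → α) (σ : Equiv.Perm (Fin n)),
      u = List.ofFn a ∧ v = List.ofFn (a ∘ σ) := by
  set b := fun i : Fin u.length => v[(i : ℕ)]'(h.length_eq ▸ i.2)
  have hv : v = List.ofFn b := List.ext_getElem (by simp [h.length_eq]) (by simp [b])
  obtain ⟨σ, hσ⟩ := Fintype.exists_perm_comp_eq_of_card_fiber_eq (a := u.get) (b := b) fun c => by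
    rw [List.card_filter_eq_count_ofFn, List.card_filter_eq_count_ofFn, List.ofFn_get, ← hv]
    exact h.count_eq c
  exact ⟨u.length, u.get, σ, (List.ofFn_get u).symm, hσ ▸ hv⟩

namespace Equiv.Perm

variable {ι : Type*} (σ : Perm ι)

noncomputable def cycleRep (i : ι) : ι :=
  (Quotient.mk (SameCycle.setoid σ) i).out

theorem sameCycle_cycleRep (i : ι) : SameCycle σ (σ.cycleRep i) i :=
  Quotient.mk_out (s := SameCycle.setoid σ) i

theorem cycleRep_eq_of_sameCycle {i j : ι} (h : SameCycle σ i j) :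
    σ.cycleRep i = σ.cycleRep j :=
  congrArg Quotient.out (Quotient.sound (s := SameCycle.setoid σ) h)

theorem cycleRep_cycleRep (i : ι) : σ.cycleRep (σ.cycleRep i) = σ.cycleRep i :=
  σ.cycleRep_eq_of_sameCycle (σ.sameCycle_cycleRep i)

theorem cycleRep_iterate (i : ι) (s : ℕ) : σ.cycleRep (σ^[s] i) = σ.cycleRep i :=
  σ.cycleRep_eq_of_sameCycle <| by
    rw [iterate_eq_pow]; exact sameCycle_pow_left.2 (SameCycle.refl _ _)

variable [Finite ι]

theorem exists_iterate_cycleRep_eq (i : ι) :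
    ∃ s < Function.minimalPeriod σ (σ.cycleRep i), σ^[s] (σ.cycleRep i) = i := by
  obtain ⟨s, hs⟩ := (σ.sameCycle_cycleRep i).exists_nat_pow_eq
  have hpos := Function.minimalPeriod_pos_of_mem_periodicPts
    (σ.injective.mem_periodicPts (σ.cycleRep i))
  exact ⟨_, Nat.mod_lt s hpos, by rw [Function.iterate_mod_minimalPeriod_eq, iterate_eq_pow, hs]⟩

noncomputable def cycleRank (i : ι) : ℕ := (σ.exists_iterate_cycleRep_eq i).choose

theorem cycleRank_lt (i : ι) : σ.cycleRank i < Function.minimalPeriod σ (σ.cycleRep i) :=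
  (σ.exists_iterate_cycleRep_eq i).choose_spec.1

theorem iterate_cycleRank (i : ι) : σ^[σ.cycleRank i] (σ.cycleRep i) = i :=
  (σ.exists_iterate_cycleRep_eq i).choose_spec.2

theorem cycleRank_iterate {c : ι} (hc : σ.cycleRep c = c) {s : ℕ}
    (hs : s < Function.minimalPeriod σ c) : σ.cycleRank (σ^[s] c) = s := by
  have h₁ := σ.cycleRank_lt (σ^[s] c)
  have h₂ := σ.iterate_cycleRank (σ^[s] c)
  rw [cycleRep_iterate, hc] at h₁ h₂
  exact Function.iterate_injOn_Iio_minimalPeriod h₁ hs h₂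

theorem cycleRank_lt_card [Fintype ι] (i : ι) : σ.cycleRank i < Fintype.card ι :=
  (σ.cycleRank_lt i).trans_le Function.minimalPeriod_le_card

end Equiv.Perm

noncomputable section

namespace CyclicallyEqualizable

open Function
open scoped Finset

variable {n : ℕ}

theorem mul_succ_add_lt {x y : ℕ} (hx : x < n) (hy : y ≤ n) :
    x * (n + 1) + y < n * (n + 2) := by
  have : (x + 1) * (n + 1) ≤ n * (n + 1) := Nat.mul_le_mul_right _ hx
  nlinarith

theorem mul_add_mul_mod (x y : ℕ) :
    (x * (n + 1) + y) * (n + 1) % (n * (n + 2)) = (y * (n + 1) + x) % (n * (n + 2)) := by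
  rw [show (x * (n + 1) + y) * (n + 1) = y * (n + 1) + x + x * (n * (n + 2)) by ring,
    Nat.add_mul_mod_self_right]

theorem mul_mod_mul_mod {x : ℕ} (hx : x < n * (n + 2)) :
    x * (n + 1) % (n * (n + 2)) * (n + 1) % (n * (n + 2)) = x := by
  rw [Nat.mod_mul_mod, show x * (n + 1) * (n + 1) = x + x * (n * (n + 2)) by ring,
    Nat.add_mul_mod_self_right, Nat.mod_eq_of_lt hx]

variable (σ : Equiv.Perm (Fin n))

/-- The time at which the rotation reaches the mark of `σ^[s] c` in column `c`. -/
def markTime (c : Fin n) (s : ℕ) : ℕ := s * (n + 1) + σ^[s] c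

def markCount (c : Fin n) (τ : ℕ) : ℕ :=
  #{s ∈ Finset.range (minimalPeriod σ c) | markTime σ c s < τ}

def columnLetter (a : Fin n → α) (c : Fin n) (τ : ℕ) : α :=
  if σ.cycleRep c = c then a (σ^[markCount σ c τ] c) else a c

def markPos (i : Fin n) : ℕ := n * (i * (n + 1) + σ.cycleRank i) + σ.cycleRep i

theorem markTime_strictMono (c : Fin n) : StrictMono (markTime σ c) := by
  intro s t hst
  have := (σ^[s] c).isLt
  calc markTime σ c s < (s + 1) * (n + 1) := by unfold markTime; nlinarith
    _ ≤ markTime σ c t := (Nat.mul_le_mul_right _ hst).trans (Nat.le_add_right _ _)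

theorem markTime_add_one_lt {c : Fin n} {s : ℕ} (hs : s < minimalPeriod σ c) :
    markTime σ c s + 1 < n * (n + 2) := by
  have hsn : s < n := by simpa using hs.trans_le minimalPeriod_le_card
  have := mul_succ_add_lt hsn (σ^[s] c).isLt
  unfold markTime
  omega

theorem markCount_markTime {c : Fin n} {s : ℕ} (hs : s < minimalPeriod σ c) :
    markCount σ c (markTime σ c s) = s := by
  have : {t ∈ Finset.range (minimalPeriod σ c) | markTime σ c t < markTime σ c s} =
      Finset.range s := by
    ext t
    simp only [Finset.mem_filter, Finset.mem_range, (markTime_strictMono σ c).lt_iff_lt]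
    omega
  rw [markCount, this, Finset.card_range]

theorem markCount_markTime_add_one {c : Fin n} {s : ℕ} (hs : s < minimalPeriod σ c) :
    markCount σ c (markTime σ c s + 1) = s + 1 := by
  have : {t ∈ Finset.range (minimalPeriod σ c) | markTime σ c t < markTime σ c s + 1} =
      Finset.range (s + 1) := by
    ext t
    simp only [Finset.mem_filter, Finset.mem_range, Nat.lt_succ_iff,
      (markTime_strictMono σ c).le_iff_le]
    omega
  rw [markCount, this, Finset.card_range]

theorem markCount_succ {c : Fin n} {τ : ℕ} (h : ∀ s < minimalPeriod σ c, markTime σ c s ≠ τ) :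
    markCount σ c (τ + 1) = markCount σ c τ := by
  unfold markCount
  congr 1
  refine Finset.filter_congr fun s hs => ?_
  have := h s (Finset.mem_range.mp hs)
  omega

theorem markCount_of_le {c : Fin n} {τ : ℕ} (hτ : n * (n + 2) ≤ τ + 1) :
    markCount σ c τ = minimalPeriod σ c := by
  unfold markCount
  rw [Finset.filter_true_of_mem fun s hs => ?_, Finset.card_range]
  have := markTime_add_one_lt σ (Finset.mem_range.mp hs)
  omega

variable (a : Fin n → α)

theorem columnLetter_markTime (i : Fin n) :
    columnLetter σ a (σ.cycleRep i) (markTime σ (σ.cycleRep i) (σ.cycleRank i)) = a i := by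
  rw [columnLetter, if_pos (σ.cycleRep_cycleRep i), markCount_markTime σ (σ.cycleRank_lt i),
    σ.iterate_cycleRank]

theorem columnLetter_markTime_add_one (i : Fin n) :
    columnLetter σ a (σ.cycleRep i) (markTime σ (σ.cycleRep i) (σ.cycleRank i) + 1) =
      a (σ i) := by
  rw [columnLetter, if_pos (σ.cycleRep_cycleRep i),
    markCount_markTime_add_one σ (σ.cycleRank_lt i), iterate_succ_apply', σ.iterate_cycleRank]

theorem columnLetter_succ_mod {c : Fin n} {τ : ℕ} (hτ : τ < n * (n + 2))
    (h : σ.cycleRep c = c → ∀ s < minimalPeriod σ c, markTime σ c s ≠ τ) :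
    columnLetter σ a c ((τ + 1) % (n * (n + 2))) = columnLetter σ a c τ := by
  unfold columnLetter
  split_ifs with hc
  · obtain hlt | heq : τ + 1 < n * (n + 2) ∨ τ + 1 = n * (n + 2) := by omega
    · rw [Nat.mod_eq_of_lt hlt, markCount_succ σ (h hc)]
    · rw [heq, Nat.mod_self, markCount_of_le σ heq.ge, iterate_minimalPeriod]
      simp [markCount]
  · rfl

theorem markPos_lt_mul (i : Fin n) : markPos σ i < n * ((i + 1) * (n + 1)) := by
  have := σ.cycleRank_lt_card i
  rw [Fintype.card_fin] at this
  have := (σ.cycleRep i).isLt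
  unfold markPos
  nlinarith

theorem markPos_strictMono : StrictMono (markPos σ) := fun i j hij =>
  calc markPos σ i < n * ((i + 1) * (n + 1)) := markPos_lt_mul σ i
    _ ≤ n * (j * (n + 1)) := Nat.mul_le_mul_left _ (Nat.mul_le_mul_right _ hij)
    _ ≤ markPos σ j := by unfold markPos; nlinarith

theorem markPos_lt (i : Fin n) : markPos σ i < n * (n * (n + 2)) :=
  calc markPos σ i < n * ((i + 1) * (n + 1)) := markPos_lt_mul σ i
    _ ≤ n * (n * (n + 2)) := Nat.mul_le_mul_left _ (Nat.mul_le_mul i.isLt (by omega))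

variable [NeZero n]

def word (p : ℕ) : α := columnLetter σ a (Fin.ofNat n p) (p / n * (n + 1) % (n * (n + 2)))

theorem word_periodic : Periodic (word σ a) (n * (n * (n + 2))) := fun p => by
  have hcol : Fin.ofNat n (p + n * (n * (n + 2))) = Fin.ofNat n p := Fin.ext (by simp)
  rw [word, word, hcol, Nat.add_mul_div_left _ _ (NeZero.pos n), add_mul,
    Nat.add_mul_mod_self_left]

theorem word_add (p : ℕ) : word σ a (p + n * (n + 1)) =
    columnLetter σ a (Fin.ofNat n p) ((p / n * (n + 1) % (n * (n + 2)) + 1) % (n * (n + 2))) := by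
  have hcol : Fin.ofNat n (p + n * (n + 1)) = Fin.ofNat n p := Fin.ext (by simp)
  rw [word, hcol, Nat.add_mul_div_left _ _ (NeZero.pos n), Nat.mod_add_mod,
    show (p / n + (n + 1)) * (n + 1) = p / n * (n + 1) + 1 + 1 * (n * (n + 2)) by ring,
    Nat.add_mul_mod_self_right]

theorem ofNat_markPos (i : Fin n) : Fin.ofNat n (markPos σ i) = σ.cycleRep i :=
  Fin.ext (by simp [markPos, Nat.mod_eq_of_lt (σ.cycleRep i).isLt])

theorem markPos_div (i : Fin n) : markPos σ i / n = i * (n + 1) + σ.cycleRank i := by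
  rw [markPos, Nat.mul_add_div (NeZero.pos n), Nat.div_eq_of_lt (σ.cycleRep i).isLt, add_zero]

theorem markPos_time (i : Fin n) :
    markPos σ i / n * (n + 1) % (n * (n + 2)) = markTime σ (σ.cycleRep i) (σ.cycleRank i) := by
  have := σ.cycleRank_lt_card i
  rw [Fintype.card_fin] at this
  rw [markPos_div, mul_add_mul_mod, markTime, σ.iterate_cycleRank,
    Nat.mod_eq_of_lt (mul_succ_add_lt this i.isLt.le)]

theorem eq_markPos {p s : ℕ} (hp : p < n * (n * (n + 2)))
    (hc : σ.cycleRep (Fin.ofNat n p) = Fin.ofNat n p) (hs : s < minimalPeriod σ (Fin.ofNat n p))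
    (hτ : p / n * (n + 1) % (n * (n + 2)) = markTime σ (Fin.ofNat n p) s) :
    p = markPos σ (σ^[s] (Fin.ofNat n p)) := by
  set c := Fin.ofNat n p
  have hsn : s < n := by simpa using hs.trans_le minimalPeriod_le_card
  have hrow : p / n = (σ^[s] c) * (n + 1) + s := by
    rw [← mul_mod_mul_mod (Nat.div_lt_of_lt_mul hp), hτ, markTime, mul_add_mul_mod,
      Nat.mod_eq_of_lt (mul_succ_add_lt (σ^[s] c).isLt hsn.le)]
  rw [markPos, σ.cycleRep_iterate, hc, σ.cycleRank_iterate hc hs, ← hrow]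
  simpa [c] using (Nat.div_add_mod p n).symm

theorem word_markPos (i : Fin n) : word σ a (markPos σ i) = a i := by
  rw [word, ofNat_markPos, markPos_time, columnLetter_markTime]

theorem word_markPos_add (i : Fin n) : word σ a (markPos σ i + n * (n + 1)) = a (σ i) := by
  rw [word_add, ofNat_markPos, markPos_time,
    Nat.mod_eq_of_lt (markTime_add_one_lt σ (σ.cycleRank_lt i)), columnLetter_markTime_add_one]

theorem word_add_of_notMem {p : ℕ} (hp : p < n * (n * (n + 2)))
    (hq : p ∉ Set.range (markPos σ)) : word σ a (p + n * (n + 1)) = word σ a p := by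
  have hm : 0 < n * (n + 2) := Nat.mul_pos (NeZero.pos n) (by omega)
  rw [word_add, word]
  refine columnLetter_succ_mod σ a (Nat.mod_lt _ hm) fun hc s hs hτ => hq ?_
  exact ⟨_, (eq_markPos σ hp hc hs hτ.symm).symm⟩

end CyclicallyEqualizable

end

open CyclicallyEqualizable in
theorem cyclicallyEqualizable_ofFn_comp {n : ℕ} (a : Fin n → α) (σ : Equiv.Perm (Fin n)) :
    CyclicallyEqualizable (List.ofFn a) (List.ofFn (a ∘ σ)) := by
  rcases Nat.eq_zero_or_pos n with rfl | hn
  · exact ⟨[[]], rfl, List.IsRotated.refl _⟩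
  · have : NeZero n := ⟨hn.ne'⟩
    exact cyclicallyEqualizable_of_periodic a (a ∘ σ) (word σ a) (word_periodic σ a)
      (markPos σ) (markPos_strictMono σ) (markPos_lt σ) (word_markPos σ a)
      (word_markPos_add σ a) fun _ hp hq => word_add_of_notMem σ a hp hq

end

/-- Main theorem: two words of equal length are cyclically equalizable iff
they have the same Parikh vector. -/
theorem stmt_8 {α : Type*} [DecidableEq α] (u v : List α) (hlen : u.length = v.length) :
    CyclicallyEqualizable u v ↔ ∀ a : α, u.count a = v.count a := by
  refine ⟨fun h => (h.perm hlen).count_eq, fun h => ?_⟩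
  obtain ⟨n, a, σ, rfl, rfl⟩ := (List.perm_iff_count.mpr h).exists_eq_ofFn_comp
  exact cyclicallyEqualizable_ofFn_comp a σ
end

section
/- For every n ≥ 1 and every permutation π of {0,1,…,n−1}, the words u = 0 1 ⋯ (n−1) and v = π(0) π(1) ⋯ π(n−1) are cyclically equalizable: there exist insertion strings s_0,…,s_n over {0,…,n−1} such that s_0 u_0 s_1 ⋯ u_{n-1} s_n is a rotation of s_0 v_0 s_1 ⋯ v_{n-1} s_n. -/
namespace Stmt9Aux

variable {α : Type*}

/-- The slice `[g a, g (a+1), …, g (b-1)]`. -/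
def seg (g : ℕ → α) (a b : ℕ) : List α := (List.range (b - a)).map (fun j => g (a + j))

theorem seg_length (g : ℕ → α) (a b : ℕ) : (seg g a b).length = b - a := by simp [seg]

theorem seg_append (g : ℕ → α) {a m b : ℕ} (h1 : a ≤ m) (h2 : m ≤ b) :
    seg g a b = seg g a m ++ seg g m b := by
  unfold seg
  have hba : b - a = (m - a) + (b - m) := by omega
  rw [hba, List.range_add, List.map_append, List.map_map]
  congr 1
  apply List.map_congr_left
  intro j hj
  simp only [Function.comp_apply]
  congr 1
  omega

theorem seg_singleton (g : ℕ → α) (m : ℕ) : seg g m (m + 1) = [g m] := by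
  simp [seg, List.range_succ]

theorem seg_split (g : ℕ → α) {a m b : ℕ} (h1 : a ≤ m) (h2 : m < b) :
    seg g a b = seg g a m ++ g m :: seg g (m + 1) b := by
  rw [seg_append g h1 (le_of_lt h2), seg_append g (Nat.le_succ m) h2, seg_singleton]
  simp

theorem seg_congr {g g' : ℕ → α} {a b : ℕ} (h : ∀ x, a ≤ x → x < b → g x = g' x) :
    seg g a b = seg g' a b := by
  unfold seg
  apply List.map_congr_left
  intro j hj
  rw [List.mem_range] at hj
  exact h (a + j) (Nat.le_add_right a j) (by omega)

/-- The gaps: slices of `g` between consecutive marked positions. -/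
def gapsL (g : ℕ → α) : ℕ → List ℕ → ℕ → List (List α)
  | a, [], L => [seg g a L]
  | a, q :: P, L => seg g a q :: gapsL g (q + 1) P L

theorem gapsL_length (g : ℕ → α) : ∀ (a : ℕ) (P : List ℕ) (L : ℕ),
    (gapsL g a P L).length = P.length + 1
  | _, [], _ => rfl
  | a, q :: P, L => by simp [gapsL, gapsL_length g (q+1) P L]

theorem interleave_gapsL {g : ℕ → α} {L : ℕ} {P : List ℕ} {w : List α}
    (hf : List.Forall₂ (fun q b => g q = b) P w) :
    ∀ a, P.Pairwise (· < ·) → (∀ q ∈ P, a ≤ q ∧ q < L) →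
      interleave (gapsL g a P L) w = seg g a L := by
  induction hf with
  | nil => intro a _ _; simp [gapsL, interleave]
  | @cons q b P w hqb htl ih =>
    intro a hpw hb
    have hq := hb q (by simp)
    have hpw' := (List.pairwise_cons.mp hpw)
    simp only [gapsL, interleave]
    rw [ih (q + 1) hpw'.2 (fun x hx => ⟨hpw'.1 x hx, (hb x (by simp [hx])).2⟩)]
    rw [seg_split g hq.1 hq.2, hqb]

theorem gapsL_congr {g g' : ℕ → α} {L : ℕ} : ∀ (P : List ℕ) (a : ℕ),
    P.Pairwise (· < ·) → (∀ q ∈ P, a ≤ q ∧ q < L) →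
    (∀ x, a ≤ x → x < L → x ∉ P → g x = g' x) → gapsL g a P L = gapsL g' a P L
  | [], a, _, _, h => by
    simp only [gapsL]
    rw [seg_congr (fun x hax hx => h x hax hx (by simp))]
  | q :: P, a, hpw, hbd, h => by
    have hpw' := (List.pairwise_cons.mp hpw)
    simp only [gapsL, List.cons.injEq]
    have hhead : seg g a q = seg g' a q := by
      apply seg_congr
      intro x hax hx
      apply h x hax (lt_trans hx (hbd q (by simp)).2)
      intro hmem
      rcases List.mem_cons.mp hmem with h1 | h1
      · omega
      · exact absurd (hpw'.1 x h1) (by omega)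
    refine ⟨hhead, ?_⟩
    have haq : a ≤ q := (hbd q (by simp)).1
    exact gapsL_congr P (q + 1) hpw'.2 (fun x hx => ⟨hpw'.1 x hx, (hbd x (by simp [hx])).2⟩)
        (fun x hax hx hnx => h x (by omega) hx (by
          intro hmem
          rcases List.mem_cons.mp hmem with h1 | h1
          · omega
          · exact hnx h1))

/-! ### The permutation arithmetic -/

section Perm

open Finset Equiv Equiv.Perm

variable {n : ℕ} (π : Equiv.Perm (Fin n))

/-- Canonical representative (minimum) of the `π`-cycle of `i`. -/
def cmin (i : Fin n) : Fin n :=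
  (Finset.univ.filter (fun j => π.SameCycle j i)).min'
    ⟨i, by simp [Finset.mem_filter, Equiv.Perm.SameCycle.refl]⟩

theorem cmin_spec (i : Fin n) : π.SameCycle (cmin π i) i := by
  have h := Finset.min'_mem (Finset.univ.filter (fun j => π.SameCycle j i))
    ⟨i, by simp [Finset.mem_filter, Equiv.Perm.SameCycle.refl]⟩
  simpa [cmin] using h

theorem cmin_eq_of_sameCycle {i j : Fin n} (h : π.SameCycle i j) : cmin π i = cmin π j := by
  unfold cmin
  congr 1
  ext x
  simp only [Finset.mem_filter, Finset.mem_univ, true_and]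
  exact ⟨fun hx => hx.trans h, fun hx => hx.trans h.symm⟩

theorem sameCycle_pow (x : Fin n) (s : ℕ) : π.SameCycle x ((π ^ s) x) :=
  ⟨s, by simp⟩

theorem cmin_cmin (i : Fin n) : cmin π (cmin π i) = cmin π i :=
  cmin_eq_of_sameCycle π (cmin_spec π i)

theorem cmin_pow (i : Fin n) (s : ℕ) : cmin π ((π ^ s) (cmin π i)) = cmin π i := by
  rw [← cmin_eq_of_sameCycle π (sameCycle_pow π (cmin π i) s), cmin_cmin]

theorem exists_pow_cmin (i : Fin n) : ∃ s : ℕ, (π ^ s) (cmin π i) = i := by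
  obtain ⟨s, _, hs⟩ := (cmin_spec π i).exists_pow_eq'
  exact ⟨s, hs⟩

/-- Time of `i` along its cycle, starting at the representative. -/
noncomputable def texp (i : Fin n) : ℕ := Nat.find (exists_pow_cmin π i)

theorem texp_spec (i : Fin n) : (π ^ texp π i) (cmin π i) = i :=
  Nat.find_spec (exists_pow_cmin π i)

theorem texp_min {i : Fin n} {s : ℕ} (h : s < texp π i) : (π ^ s) (cmin π i) ≠ i :=
  Nat.find_min (exists_pow_cmin π i) h

theorem texp_pow {i : Fin n} {s : ℕ} (hs : s ≤ texp π i) :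
    texp π ((π ^ s) (cmin π i)) = s := by
  set j := (π ^ s) (cmin π i) with hj
  have hcm : cmin π j = cmin π i := cmin_pow π i s
  have hle : texp π j ≤ s := Nat.find_min' (exists_pow_cmin π j) (by rw [hcm, ← hj])
  rcases eq_or_lt_of_le hle with h | h
  · exact h
  · exfalso
    have e1 : (π ^ texp π j) (cmin π i) = j := by rw [← hcm]; exact texp_spec π j
    have e2 : (π ^ (texp π i - s + texp π j)) (cmin π i) = i := by
      rw [pow_add, Equiv.Perm.mul_apply, e1, hj, ← Equiv.Perm.mul_apply, ← pow_add,
        Nat.sub_add_cancel hs]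
      exact texp_spec π i
    exact texp_min π (by omega) e2

theorem texp_lt (hn : 0 < n) (i : Fin n) : texp π i < n := by
  have hinj : Function.Injective (fun s : Fin (texp π i + 1) => (π ^ (s : ℕ)) (cmin π i)) := by
    intro s s' h
    have h1 := texp_pow π (Nat.lt_succ_iff.mp s.isLt)
    have h2 := texp_pow π (Nat.lt_succ_iff.mp s'.isLt)
    apply Fin.ext
    rw [← h1, ← h2]
    simp only at h
    rw [h]
  have hcard := Fintype.card_le_of_injective _ hinj
  simpa using hcard

/-! Constants. -/

def Sc (n : ℕ) : ℕ := n * (n + 1)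
def Mc (n : ℕ) : ℕ := n * (n + 1) * (n + 1) - 1
def Lc (n : ℕ) : ℕ := n * Mc n
def rc (n : ℕ) : ℕ := n * (n + 1)

theorem hMc {n : ℕ} (hn : 0 < n) : Mc n + 1 = (n + 1) * Sc n := by
  have h1 : 1 ≤ n * (n + 1) * (n + 1) := by
    have : 1 * 1 * 1 ≤ n * (n + 1) * (n + 1) :=
      Nat.mul_le_mul (Nat.mul_le_mul hn (by omega)) (by omega)
    omega
  unfold Mc Sc
  rw [Nat.sub_add_cancel h1]
  ring

theorem Mc_big {n : ℕ} (hn : 0 < n) : n + 1 < Mc n := by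
  have h := hMc hn
  have h2 : n + 1 ≤ n * (n + 1) := by nlinarith
  have h3 : (n + 1) * (n + 1) ≤ (n + 1) * (n * (n + 1)) := Nat.mul_le_mul_left _ h2
  have h4 : n + 3 ≤ (n + 1) * (n + 1) := by nlinarith
  have : (n + 2) + 1 ≤ (n + 1) * Sc n := by unfold Sc; omega
  omega

/-! The data. -/

noncomputable def aaF (i : Fin n) : ℕ := texp π i * Sc n + (i : ℕ) * (n + 1)
noncomputable def hhF (i : Fin n) : ℕ := texp π i + (n + 1) * (n + 1) * (i : ℕ)
noncomputable def ppF (i : Fin n) : ℕ := n * hhF π i + (cmin π i : ℕ)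

noncomputable def cntF (c t : ℕ) : ℕ :=
  (Finset.univ.filter (fun j : Fin n => (cmin π j : ℕ) = c ∧ aaF π j < t)).card

noncomputable def WFb (hn : 0 < n) (y : ℕ) : Fin n :=
  (π ^ cntF π (y % n) (y / n * Sc n % Mc n)) ⟨y % n, Nat.mod_lt _ hn⟩

noncomputable def WF (hn : 0 < n) (x : ℕ) : Fin n := WFb π hn (x % Lc n)

variable {π}

theorem aa_lt (hn : 0 < n) (i : Fin n) : aaF π i + 1 < Mc n := by
  have h1 : texp π i + 1 ≤ n := texp_lt π hn i
  have h2 : (i : ℕ) + 1 ≤ n := i.isLt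
  have hm := hMc hn
  have key : aaF π i + 2 + 1 ≤ (n + 1) * Sc n := by
    unfold aaF Sc
    have e1 : (texp π i + 1) * (n * (n + 1)) ≤ n * (n * (n + 1)) :=
      Nat.mul_le_mul_right _ h1
    have e2 : ((i : ℕ) + 1) * (n + 1) ≤ n * (n + 1) := Nat.mul_le_mul_right _ h2
    nlinarith [e1, e2, hn]
  omega

theorem hS_id (hn : 0 < n) (i : Fin n) :
    hhF π i * Sc n = aaF π i + ((i : ℕ) * (n + 1)) * Mc n := by
  have h := hMc hn
  calc hhF π i * Sc n
      = texp π i * Sc n + ((n + 1) * Sc n) * ((n + 1) * (i : ℕ)) := by unfold hhF; ring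
    _ = texp π i * Sc n + (Mc n + 1) * ((n + 1) * (i : ℕ)) := by rw [h]
    _ = aaF π i + ((i : ℕ) * (n + 1)) * Mc n := by unfold aaF; ring

theorem time_pp (hn : 0 < n) (i : Fin n) : hhF π i * Sc n % Mc n = aaF π i := by
  rw [hS_id hn i, Nat.add_mul_mod_self_right]
  exact Nat.mod_eq_of_lt (by have := aa_lt (π := π) hn i; omega)

theorem hh_lt (hn : 0 < n) (i : Fin n) : hhF π i + (n + 1) < Mc n := by
  have h1 : texp π i + 1 ≤ n := texp_lt π hn i
  have h2 : (i : ℕ) + 1 ≤ n := i.isLt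
  have key : hhF π i + (n + 1) + 1 + 1 ≤ n * (n + 1) * (n + 1) := by
    unfold hhF
    have e1 : (n + 1) * (n + 1) * ((i : ℕ) + 1) ≤ (n + 1) * (n + 1) * n :=
      Nat.mul_le_mul_left _ h2
    nlinarith [e1, hn, h1]
  unfold Mc
  omega

theorem pp_lt (hn : 0 < n) (i : Fin n) : ppF π i < Lc n := by
  have h1 : hhF π i + 1 ≤ Mc n := by have := hh_lt (π := π) hn i; omega
  have hc : (cmin π i : ℕ) < n := (cmin π i).isLt
  unfold ppF Lc
  calc n * hhF π i + (cmin π i : ℕ) < n * (hhF π i + 1) := by nlinarith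
    _ ≤ n * Mc n := Nat.mul_le_mul_left _ h1

theorem pp_mono (hn : 0 < n) {i j : Fin n} (hij : i < j) : ppF π i < ppF π j := by
  have h1 : texp π i + 1 ≤ n := texp_lt π hn i
  have hij' : (i : ℕ) + 1 ≤ (j : ℕ) := hij
  have hh : hhF π i + 1 ≤ hhF π j := by
    unfold hhF
    nlinarith [h1, hij', hn]
  have hc : (cmin π i : ℕ) < n := (cmin π i).isLt
  unfold ppF
  calc n * hhF π i + (cmin π i : ℕ) < n * (hhF π i + 1) := by nlinarith
    _ ≤ n * hhF π j := Nat.mul_le_mul_left _ hh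
    _ ≤ n * hhF π j + (cmin π j : ℕ) := Nat.le_add_right _ _

theorem eq_of_texp_eq {i j : Fin n} (hc : cmin π j = cmin π i) (ht : texp π j = texp π i) :
    j = i := by
  have h1 := texp_spec π j
  rw [hc, ht] at h1
  rw [← h1]
  exact texp_spec π i

theorem iK_lt {n : ℕ} (i : Fin n) : (i : ℕ) * (n + 1) < Sc n := by
  have hi := i.isLt
  unfold Sc
  nlinarith [hi]

theorem aux_lt_iff (hn : 0 < n) {i j : Fin n} (hc : cmin π j = cmin π i) :
    aaF π j < aaF π i ↔ texp π j < texp π i := by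
  have hjK := iK_lt j
  have hiK := iK_lt i
  constructor
  · intro h
    by_contra hle
    push_neg at hle
    rcases eq_or_lt_of_le hle with he | hlt
    · have : j = i := eq_of_texp_eq hc he.symm
      subst this
      omega
    · have : texp π i * Sc n + Sc n ≤ texp π j * Sc n := by
        have : (texp π i + 1) * Sc n ≤ texp π j * Sc n :=
          Nat.mul_le_mul_right _ hlt
        nlinarith [this]
      unfold aaF at h
      omega
  · intro h
    have : texp π j * Sc n + Sc n ≤ texp π i * Sc n := by
      have : (texp π j + 1) * Sc n ≤ texp π i * Sc n := Nat.mul_le_mul_right _ h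
      nlinarith [this]
    unfold aaF
    omega

theorem card_texp_lt (i : Fin n) {b : ℕ} (hb : b ≤ texp π i + 1) :
    (Finset.univ.filter (fun j : Fin n => cmin π j = cmin π i ∧ texp π j < b)).card = b := by
  have key : (Finset.univ.filter (fun j : Fin n => cmin π j = cmin π i ∧ texp π j < b)).card
      = (Finset.range b).card := by
    apply Finset.card_bij' (fun j _ => texp π j) (fun s _ => (π ^ s) (cmin π i))
    · intro j hj
      simp only [Finset.mem_filter] at hj
      simpa using hj.2.2
    · intro s hs
      simp only [Finset.mem_range] at hs
      have hs' : s ≤ texp π i := by omega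
      simp only [Finset.mem_filter, Finset.mem_univ, true_and]
      exact ⟨cmin_pow π i s, by rw [texp_pow π hs']; omega⟩
    · intro j hj
      simp only [Finset.mem_filter] at hj
      rw [← hj.2.1]
      exact texp_spec π j
    · intro s hs
      simp only [Finset.mem_range] at hs
      exact texp_pow π (by omega)
  rw [key, Finset.card_range]

theorem cnt_aa (hn : 0 < n) (i : Fin n) : cntF π (cmin π i : ℕ) (aaF π i) = texp π i := by
  unfold cntF
  have heq : (Finset.univ.filter (fun j : Fin n => (cmin π j : ℕ) = (cmin π i : ℕ) ∧ aaF π j < aaF π i))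
      = Finset.univ.filter (fun j : Fin n => cmin π j = cmin π i ∧ texp π j < texp π i) := by
    apply Finset.filter_congr
    intro j _
    constructor
    · rintro ⟨h1, h2⟩
      have h1' : cmin π j = cmin π i := Fin.ext h1
      exact ⟨h1', (aux_lt_iff hn h1').mp h2⟩
    · rintro ⟨h1, h2⟩
      exact ⟨congrArg Fin.val h1, (aux_lt_iff hn h1).mpr h2⟩
  rw [heq]
  exact card_texp_lt i (Nat.le_succ _)

theorem cnt_aa' (hn : 0 < n) (i : Fin n) :
    cntF π (cmin π i : ℕ) (aaF π i + 1) = texp π i + 1 := by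
  unfold cntF
  have heq : (Finset.univ.filter (fun j : Fin n => (cmin π j : ℕ) = (cmin π i : ℕ) ∧ aaF π j < aaF π i + 1))
      = Finset.univ.filter (fun j : Fin n => cmin π j = cmin π i ∧ texp π j < texp π i + 1) := by
    apply Finset.filter_congr
    intro j _
    constructor
    · rintro ⟨h1, h2⟩
      have h1' : cmin π j = cmin π i := Fin.ext h1
      refine ⟨h1', ?_⟩
      by_contra hgt
      push_neg at hgt
      have hlt : texp π i < texp π j := by omega
      have := (aux_lt_iff hn h1'.symm).mpr hlt
      omega
    · rintro ⟨h1, h2⟩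
      refine ⟨congrArg Fin.val h1, ?_⟩
      rcases Nat.lt_succ_iff_lt_or_eq.mp h2 with h | h
      · have := (aux_lt_iff hn h1).mpr h
        omega
      · have : j = i := eq_of_texp_eq h1 h
        subst this
        omega
  rw [heq]
  exact card_texp_lt i (le_refl _)

theorem pow_card_cmin (j0 : Fin n) :
    (π ^ (Finset.univ.filter (fun j : Fin n => cmin π j = cmin π j0)).card) (cmin π j0)
      = cmin π j0 := by
  have hmem : ∀ j, cmin π j = cmin π j0 ↔ π.SameCycle (cmin π j0) j := by
    intro j
    constructor
    · intro h
      have := cmin_spec π j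
      rw [h] at this
      exact this
    · intro h
      rw [← cmin_eq_of_sameCycle π h, cmin_cmin]
  by_cases hfix : π (cmin π j0) = cmin π j0
  · have hset : Finset.univ.filter (fun j : Fin n => cmin π j = cmin π j0) = {cmin π j0} := by
      ext j
      simp only [Finset.mem_filter, Finset.mem_univ, true_and, Finset.mem_singleton, hmem j]
      constructor
      · rintro ⟨z, hz⟩
        rw [← hz, Equiv.Perm.zpow_apply_eq_self_of_apply_eq_self hfix]
      · rintro rfl
        exact Equiv.Perm.SameCycle.refl _ _
    rw [hset, Finset.card_singleton, pow_one, hfix]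
  · have hsup : cmin π j0 ∈ π.support := Equiv.Perm.mem_support.2 hfix
    have hset : Finset.univ.filter (fun j : Fin n => cmin π j = cmin π j0)
        = (π.cycleOf (cmin π j0)).support := by
      ext j
      simp only [Finset.mem_filter, Finset.mem_univ, true_and, hmem j,
        Equiv.Perm.mem_support_cycleOf_iff, hsup, and_true]
    rw [hset]
    have hcyc : (π.cycleOf (cmin π j0)).IsCycle := Equiv.Perm.isCycle_cycleOf π hfix
    have hord : orderOf (π.cycleOf (cmin π j0)) = (π.cycleOf (cmin π j0)).support.card :=
      hcyc.orderOf
    rw [← Equiv.Perm.cycleOf_pow_apply_self π (cmin π j0), ← hord, pow_orderOf_eq_one]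
    rfl

theorem Lc_pos (hn : 0 < n) : 0 < Lc n := by
  have := Mc_big (n := n) hn
  unfold Lc
  exact Nat.mul_pos hn (by omega)

theorem WF_mod (hn : 0 < n) (x : ℕ) : WF π hn x = WF π hn (x % Lc n) := by
  unfold WF
  rw [Nat.mod_mod_of_dvd x dvd_rfl]

theorem WF_eval (hn : 0 < n) {x c h : ℕ} (hx : x = n * h + c) (hc : c < n) (hh : h < Mc n) :
    WF π hn x = (π ^ cntF π c (h * Sc n % Mc n)) ⟨c, hc⟩ := by
  have hxL : x < Lc n := by
    rw [hx]
    unfold Lc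
    have e : n * (h + 1) = n * h + n := by ring
    calc n * h + c < n * (h + 1) := by omega
      _ ≤ n * Mc n := Nat.mul_le_mul_left _ (by omega)
  have e1 : x % Lc n = x := Nat.mod_eq_of_lt hxL
  have e2 : x % n = c := by rw [hx, Nat.mul_add_mod]; exact Nat.mod_eq_of_lt hc
  have e3 : x / n = h := by
    rw [hx, Nat.mul_add_div hn, Nat.div_eq_of_lt hc, Nat.add_zero]
  unfold WF WFb
  rw [e1]
  have hcnt : cntF π (x % n) (x / n * Sc n % Mc n) = cntF π c (h * Sc n % Mc n) := by
    rw [e2, e3]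
  have hfin : (⟨x % n, Nat.mod_lt _ hn⟩ : Fin n) = ⟨c, hc⟩ := Fin.ext e2
  rw [hcnt, hfin]

theorem WF1 (hn : 0 < n) (i : Fin n) : WF π hn (ppF π i) = i := by
  have hhM : hhF π i < Mc n := by have := hh_lt (π := π) hn i; omega
  rw [WF_eval hn (rfl : ppF π i = n * hhF π i + (cmin π i : ℕ)) (cmin π i).isLt hhM]
  rw [time_pp hn i, cnt_aa hn i, Fin.eta]
  exact texp_spec π i

theorem WF2 (hn : 0 < n) (i : Fin n) : WF π hn (ppF π i + rc n) = π i := by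
  have hx : ppF π i + rc n = n * (hhF π i + (n + 1)) + (cmin π i : ℕ) := by
    unfold ppF rc; ring
  rw [WF_eval hn hx (cmin π i).isLt (hh_lt hn i)]
  have hm := hMc (n := n) hn
  have ht : (hhF π i + (n + 1)) * Sc n % Mc n = aaF π i + 1 := by
    have hid : (hhF π i + (n + 1)) * Sc n
        = (aaF π i + 1) + ((i : ℕ) * (n + 1) + 1) * Mc n := by
      calc (hhF π i + (n + 1)) * Sc n = hhF π i * Sc n + (n + 1) * Sc n := by ring
        _ = aaF π i + ((i : ℕ) * (n + 1)) * Mc n + (Mc n + 1) := by rw [hS_id hn i, hm]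
        _ = (aaF π i + 1) + ((i : ℕ) * (n + 1) + 1) * Mc n := by ring
    rw [hid, Nat.add_mul_mod_self_right]
    exact Nat.mod_eq_of_lt (by have := aa_lt (π := π) hn i; omega)
  rw [ht, cnt_aa' hn i, Fin.eta, pow_succ', Equiv.Perm.mul_apply, texp_spec π i]

theorem hh_cong_of_time {i : Fin n} (hn : 0 < n) {h : ℕ} (hhM : h < Mc n)
    (ht : h * Sc n % Mc n = aaF π i) : h = hhF π i := by
  have hm := hMc (n := n) hn
  have hhiM : hhF π i < Mc n := by have := hh_lt (π := π) hn i; omega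
  -- multiply the congruence by (n+1)
  have l1 : h * Sc n * (n + 1) = h * Mc n + h := by
    calc h * Sc n * (n + 1) = h * ((n + 1) * Sc n) := by ring
      _ = h * (Mc n + 1) := by rw [hm]
      _ = h * Mc n + h := by ring
  have r1 : aaF π i * (n + 1) = texp π i * Mc n + hhF π i := by
    calc aaF π i * (n + 1)
        = texp π i * ((n + 1) * Sc n) + (n + 1) * (n + 1) * (i : ℕ) := by unfold aaF; ring
      _ = texp π i * (Mc n + 1) + (n + 1) * (n + 1) * (i : ℕ) := by rw [hm]
      _ = texp π i * Mc n + hhF π i := by unfold hhF; ring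
  have haM : aaF π i < Mc n := by have := aa_lt (π := π) hn i; omega
  have m0 : h * Sc n * (n + 1) % Mc n = aaF π i * (n + 1) % Mc n := by
    have e : h * Sc n % Mc n = aaF π i % Mc n := by rw [ht, Nat.mod_eq_of_lt haM]
    exact Nat.ModEq.mul_right (n + 1) e
  have m1 : (h * Mc n + h) % Mc n = h % Mc n := by
    rw [Nat.add_comm, Nat.add_mul_mod_self_right]
  have m2 : (texp π i * Mc n + hhF π i) % Mc n = hhF π i % Mc n := by
    rw [Nat.add_comm, Nat.add_mul_mod_self_right]
  have : h % Mc n = hhF π i % Mc n := by rw [← m1, ← l1, m0, r1, m2]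
  rwa [Nat.mod_eq_of_lt hhM, Nat.mod_eq_of_lt hhiM] at this

theorem WF3 (hn : 0 < n) {x : ℕ} (hxL : x < Lc n) (hp : ∀ i : Fin n, x ≠ ppF π i) :
    WF π hn (x + rc n) = WF π hn x := by
  have hm := hMc (n := n) hn
  have hMbig := Mc_big (n := n) hn
  set c := x % n with hcdef
  set h := x / n with hhdef
  have hx : x = n * h + c := (Nat.div_add_mod x n).symm
  have hc : c < n := Nat.mod_lt _ hn
  have hhM : h < Mc n := by
    rw [hhdef, Nat.div_lt_iff_lt_mul hn]
    unfold Lc at hxL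
    have : n * Mc n = Mc n * n := Nat.mul_comm _ _
    omega
  have hW : WF π hn x = (π ^ cntF π c (h * Sc n % Mc n)) ⟨c, hc⟩ := WF_eval hn hx hc hhM
  set tm := h * Sc n % Mc n with htm
  have hMpos : 0 < Mc n := by omega
  have htmlt : tm < Mc n := Nat.mod_lt _ hMpos
  have h1M : 1 % Mc n = 1 := Nat.mod_eq_of_lt (by omega)
  have hstep : (h + (n + 1)) * Sc n % Mc n = (tm + 1) % Mc n := by
    have e1 : (h + (n + 1)) * Sc n = (h * Sc n + 1) + 1 * Mc n := by
      calc (h + (n + 1)) * Sc n = h * Sc n + (n + 1) * Sc n := by ring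
        _ = h * Sc n + (Mc n + 1) := by rw [hm]
        _ = (h * Sc n + 1) + 1 * Mc n := by ring
    rw [e1, Nat.add_mul_mod_self_right, Nat.add_mod, h1M, ← htm]
  have hkey : ∃ h2 : ℕ, (x + rc n) % Lc n = n * h2 + c ∧ h2 < Mc n ∧
      h2 * Sc n % Mc n = (tm + 1) % Mc n := by
    by_cases hcase : h + (n + 1) < Mc n
    · refine ⟨h + (n + 1), ?_, hcase, hstep⟩
      have hx2 : x + rc n = n * (h + (n + 1)) + c := by rw [hx]; unfold rc; ring
      have hlt : x + rc n < Lc n := by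
        rw [hx2]
        unfold Lc
        have e : n * (h + (n + 1) + 1) = n * (h + (n + 1)) + n := by ring
        calc n * (h + (n + 1)) + c < n * (h + (n + 1) + 1) := by omega
          _ ≤ n * Mc n := Nat.mul_le_mul_left _ (by omega)
      rw [Nat.mod_eq_of_lt hlt, hx2]
    · push_neg at hcase
      set h2 := h + (n + 1) - Mc n with hh2
      have hh2e : h2 + Mc n = h + (n + 1) := by omega
      have hh2M : h2 < Mc n := by omega
      refine ⟨h2, ?_, hh2M, ?_⟩
      · have hxr : x + rc n = (n * h2 + c) + Lc n := by
          calc x + rc n = n * (h + (n + 1)) + c := by rw [hx]; unfold rc; ring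
            _ = n * (h2 + Mc n) + c := by rw [hh2e]
            _ = (n * h2 + c) + Lc n := by unfold Lc; ring
        rw [hxr, Nat.add_mod_right]
        apply Nat.mod_eq_of_lt
        unfold Lc
        have e : n * (h2 + 1) = n * h2 + n := by ring
        calc n * h2 + c < n * (h2 + 1) := by omega
          _ ≤ n * Mc n := Nat.mul_le_mul_left _ (by omega)
      · have e1 : h2 * Sc n + Sc n * Mc n = (h + (n + 1)) * Sc n := by
          calc h2 * Sc n + Sc n * Mc n = (h2 + Mc n) * Sc n := by ring
            _ = (h + (n + 1)) * Sc n := by rw [hh2e]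
        have e2 : h2 * Sc n % Mc n = (h2 * Sc n + Sc n * Mc n) % Mc n := by
          rw [Nat.add_mul_mod_self_right]
        rw [e2, e1, hstep]
  obtain ⟨h2, hmod, hh2M, ht2⟩ := hkey
  have hW2 : WF π hn (x + rc n) = (π ^ cntF π c ((tm + 1) % Mc n)) ⟨c, hc⟩ := by
    rw [WF_mod hn (x + rc n), hmod,
      WF_eval hn (rfl : n * h2 + c = n * h2 + c) hc hh2M, ht2]
  rw [hW, hW2]
  by_cases hwrap : tm + 1 < Mc n
  · rw [Nat.mod_eq_of_lt hwrap]
    have hcnt : cntF π c (tm + 1) = cntF π c tm := by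
      unfold cntF
      apply congrArg
      apply Finset.filter_congr
      intro j _
      constructor
      · rintro ⟨h1, h2lt⟩
        refine ⟨h1, ?_⟩
        have hne : aaF π j ≠ tm := by
          intro haj
          have hhj : h = hhF π j := hh_cong_of_time hn hhM (htm.symm.trans haj.symm)
          apply hp j
          rw [hx, hhj]
          unfold ppF
          rw [← h1]
        omega
      · rintro ⟨h1, h2lt⟩
        exact ⟨h1, by omega⟩
    rw [hcnt]
  · have htm1 : tm + 1 = Mc n := by omega
    rw [htm1, Nat.mod_self]
    have hc0 : cntF π c 0 = 0 := by
      unfold cntF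
      apply Finset.card_eq_zero.mpr
      rw [Finset.filter_eq_empty_iff]
      intro j _
      rintro ⟨_, h2lt⟩
      omega
    rw [hc0, pow_zero]
    by_cases hcls : ∃ j0 : Fin n, (cmin π j0 : ℕ) = c
    · obtain ⟨j0, hj0⟩ := hcls
      have hfull : cntF π c tm
          = (Finset.univ.filter (fun j : Fin n => cmin π j = cmin π j0)).card := by
        unfold cntF
        apply congrArg
        apply Finset.filter_congr
        intro j _
        have hatm : aaF π j < tm := by
          have := aa_lt (π := π) hn j
          omega
        constructor
        · rintro ⟨h1, _⟩
          exact Fin.ext (by rw [h1, hj0])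
        · intro h1
          exact ⟨by rw [congrArg Fin.val h1]; exact hj0, hatm⟩
      rw [hfull]
      have hcc : (⟨c, hc⟩ : Fin n) = cmin π j0 := Fin.ext hj0.symm
      rw [hcc, Equiv.Perm.one_apply]
      exact (pow_card_cmin (π := π) j0).symm
    · push_neg at hcls
      have hz : cntF π c tm = 0 := by
        unfold cntF
        apply Finset.card_eq_zero.mpr
        rw [Finset.filter_eq_empty_iff]
        intro j _
        rintro ⟨h1, _⟩
        exact hcls j h1
      rw [hz, pow_zero]

theorem WF_addL (hn : 0 < n) (j : ℕ) : WF π hn (Lc n + j) = WF π hn j := by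
  rw [WF_mod hn (Lc n + j), Nat.add_mod_left, ← WF_mod hn j]

end Perm

end Stmt9Aux

/-- For any permutation `π` of `Fin n`, the words `0 1 ⋯ (n-1)` and
`π(0) π(1) ⋯ π(n-1)` are cyclically equalizable. -/
theorem stmt_9 (n : ℕ) (hn : 1 ≤ n) (π : Equiv.Perm (Fin n)) :
    CyclicallyEqualizable (List.finRange n) ((List.finRange n).map π) := by
  classical
  have hn0 : 0 < n := hn
  let W : ℕ → Fin n := Stmt9Aux.WF π hn0
  let W' : ℕ → Fin n := fun x => Stmt9Aux.WF π hn0 (x + Stmt9Aux.rc n)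
  let P : List ℕ := (List.finRange n).map (fun i => Stmt9Aux.ppF π i)
  refine ⟨Stmt9Aux.gapsL W 0 P (Stmt9Aux.Lc n), ?_, ?_⟩
  · rw [Stmt9Aux.gapsL_length]
    simp [P]
  · have hpwP : P.Pairwise (· < ·) :=
      List.Pairwise.map _ (fun a b hab => Stmt9Aux.pp_mono hn0 hab)
        (List.pairwise_lt_finRange n)
    have hbd : ∀ q ∈ P, 0 ≤ q ∧ q < Stmt9Aux.Lc n := by
      intro q hq
      rw [List.mem_map] at hq
      obtain ⟨i, _, rfl⟩ := hq
      exact ⟨Nat.zero_le _, Stmt9Aux.pp_lt hn0 i⟩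
    have hf1 : List.Forall₂ (fun q b => W q = b) P (List.finRange n) := by
      rw [List.forall₂_map_left_iff, List.forall₂_same]
      intro i _
      exact Stmt9Aux.WF1 hn0 i
    have h1 : interleave (Stmt9Aux.gapsL W 0 P (Stmt9Aux.Lc n)) (List.finRange n)
        = Stmt9Aux.seg W 0 (Stmt9Aux.Lc n) :=
      Stmt9Aux.interleave_gapsL hf1 0 hpwP hbd
    have hcongr : Stmt9Aux.gapsL W 0 P (Stmt9Aux.Lc n)
        = Stmt9Aux.gapsL W' 0 P (Stmt9Aux.Lc n) := by
      apply Stmt9Aux.gapsL_congr P 0 hpwP hbd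
      intro x _ hx hnx
      have hp : ∀ i : Fin n, x ≠ Stmt9Aux.ppF π i := by
        intro i hxe
        apply hnx
        rw [List.mem_map]
        exact ⟨i, List.mem_finRange i, hxe.symm⟩
      exact (Stmt9Aux.WF3 hn0 hx hp).symm
    have hf2 : List.Forall₂ (fun q b => W' q = b) P ((List.finRange n).map π) := by
      rw [List.forall₂_map_left_iff, List.forall₂_map_right_iff, List.forall₂_same]
      intro i _
      exact Stmt9Aux.WF2 hn0 i
    have h2 : interleave (Stmt9Aux.gapsL W 0 P (Stmt9Aux.Lc n)) ((List.finRange n).map π)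
        = Stmt9Aux.seg W' 0 (Stmt9Aux.Lc n) := by
      rw [hcongr]
      exact Stmt9Aux.interleave_gapsL hf2 0 hpwP hbd
    refine ⟨Stmt9Aux.rc n, ?_⟩
    rw [h1, h2]
    have hMb := Stmt9Aux.Mc_big (n := n) hn0
    have hrL : Stmt9Aux.rc n ≤ Stmt9Aux.Lc n := by
      unfold Stmt9Aux.rc Stmt9Aux.Lc
      exact Nat.mul_le_mul_left n (by omega)
    rw [Stmt9Aux.seg_append W (Nat.zero_le (Stmt9Aux.rc n)) hrL]
    have hlen : (Stmt9Aux.seg W 0 (Stmt9Aux.rc n)).length = Stmt9Aux.rc n := by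
      rw [Stmt9Aux.seg_length]; omega
    have hrot := List.rotate_append_length_eq (Stmt9Aux.seg W 0 (Stmt9Aux.rc n))
      (Stmt9Aux.seg W (Stmt9Aux.rc n) (Stmt9Aux.Lc n))
    rw [hlen] at hrot
    rw [hrot]
    rw [Stmt9Aux.seg_append W' (Nat.zero_le (Stmt9Aux.Lc n - Stmt9Aux.rc n)) (Nat.sub_le _ _)]
    congr 1
    · -- seg W r L = seg W' 0 (L - r)
      unfold Stmt9Aux.seg
      have hr0 : Stmt9Aux.Lc n - Stmt9Aux.rc n - 0 = Stmt9Aux.Lc n - Stmt9Aux.rc n := by omega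
      rw [hr0]
      apply List.map_congr_left
      intro j hj
      show W (Stmt9Aux.rc n + j) = W' (0 + j)
      show Stmt9Aux.WF π hn0 (Stmt9Aux.rc n + j) = Stmt9Aux.WF π hn0 (0 + j + Stmt9Aux.rc n)
      congr 1
      omega
    · -- seg W 0 r = seg W' (L - r) L
      unfold Stmt9Aux.seg
      have e : Stmt9Aux.Lc n - (Stmt9Aux.Lc n - Stmt9Aux.rc n) = Stmt9Aux.rc n - 0 := by omega
      rw [e]
      apply List.map_congr_left
      intro j hj
      rw [List.mem_range] at hj
      show W (0 + j) = W' (Stmt9Aux.Lc n - Stmt9Aux.rc n + j)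
      show Stmt9Aux.WF π hn0 (0 + j) = Stmt9Aux.WF π hn0 (Stmt9Aux.Lc n - Stmt9Aux.rc n + j + Stmt9Aux.rc n)
      have e2 : Stmt9Aux.Lc n - Stmt9Aux.rc n + j + Stmt9Aux.rc n = Stmt9Aux.Lc n + j := by omega
      rw [e2, Stmt9Aux.WF_addL hn0 j, Nat.zero_add]
end

section
/- Let n ≥ 1 and let π be a cyclic permutation of {0,…,n−1} (a single n-cycle). Then there exist words u', v' of length n² over the alphabet {0,…,n−1} such that (1) u' and v' are cyclically equivalent with offset n+1, and (2) u' and v' arise from u = 0 1 ⋯ (n−1) and v = π(0) π(1) ⋯ π(n−1) by the same simultaneous insertion (deleting the same set of n² − n positions from u' and v' recovers u and v respectively, and u' and v' agree at all deleted positions). -/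
namespace Stmt10Aux

variable {n : ℕ}


/-- Injectivity of k ↦ π^k 0 on [0, n). -/
lemma pow_inj (hn : 1 ≤ n) (π : Equiv.Perm (Fin n))
    (hcyc : ∀ t : Fin n, ∃ k : ℕ, (π ^ k) ⟨0, hn⟩ = t) :
    ∀ a b : ℕ, a < n → b < n → (π ^ a) ⟨0, hn⟩ = (π ^ b) ⟨0, hn⟩ → a = b := by
  set z0 : Fin n := ⟨0, hn⟩ with hz0
  have key : ∀ a b : ℕ, a ≤ b → b < n → (π ^ a) z0 = (π ^ b) z0 → a = b := by
    intro a b hab hb heq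
    by_contra hne
    have hd : 0 < b - a := by omega
    have hop : 0 < orderOf π := orderOf_pos π
    have hfix : ∀ t : Fin n, (π ^ (b - a)) t = t := by
      intro t
      obtain ⟨k, hk⟩ := hcyc t
      set s := k + orderOf π * a with hs
      have hsa : a ≤ s := by
        have : a ≤ orderOf π * a := Nat.le_mul_of_pos_left a hop
        omega
      have hst : (π ^ s) z0 = t := by
        rw [hs, pow_add, pow_mul, pow_orderOf_eq_one, one_pow, mul_one, hk]
      have h1 : (π ^ (b - a)) t = (π ^ ((b - a) + s)) z0 := by
        rw [← hst, ← Equiv.Perm.mul_apply, ← pow_add]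
      have h2 : (b - a) + s = (s - a) + b := by omega
      have h3 : (π ^ ((s - a) + b)) z0 = (π ^ ((s - a) + a)) z0 := by
        rw [pow_add, pow_add, Equiv.Perm.mul_apply, Equiv.Perm.mul_apply, ← heq]
      have h4 : (s - a) + a = s := by omega
      rw [h1, h2, h3, h4, hst]
    have hpow1 : π ^ (b - a) = 1 := Equiv.ext hfix
    have hdvd : orderOf π ∣ (b - a) := orderOf_dvd_of_pow_eq_one hpow1
    have hle : orderOf π ≤ b - a := Nat.le_of_dvd hd hdvd
    -- surjectivity of Fin (orderOf π) → Fin n gives n ≤ orderOf π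
    have hsurj : Function.Surjective (fun m : Fin (orderOf π) => (π ^ (m : ℕ)) z0) := by
      intro t
      obtain ⟨k, hk⟩ := hcyc t
      refine ⟨⟨k % orderOf π, Nat.mod_lt _ hop⟩, ?_⟩
      simpa [pow_mod_orderOf] using hk
    have hcard : n ≤ orderOf π := by
      have := Fintype.card_le_of_surjective _ hsurj
      simpa using this
    omega
  intro a b ha hb heq
  rcases le_total a b with h | h
  · exact key a b h hb heq
  · exact (key b a h ha heq.symm).symm

/-- π^n 0 = 0. -/
lemma pow_n (hn : 1 ≤ n) (π : Equiv.Perm (Fin n))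
    (hcyc : ∀ t : Fin n, ∃ k : ℕ, (π ^ k) ⟨0, hn⟩ = t) :
    (π ^ n) ⟨0, hn⟩ = ⟨0, hn⟩ := by
  set z0 : Fin n := ⟨0, hn⟩ with hz0
  have hinj : Function.Injective (fun m : Fin n => (π ^ (m : ℕ)) z0) := by
    intro a b h
    exact Fin.val_injective (Stmt10Aux.pow_inj hn π hcyc a.val b.val a.isLt b.isLt h)
  have hsurj := Finite.surjective_of_injective hinj
  obtain ⟨a, ha⟩ := hsurj ((π ^ n) z0)
  rcases Nat.eq_zero_or_pos a.val with h0 | hpos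
  · simp only at ha
    rw [← ha, h0, pow_zero]; rfl
  · exfalso
    have ha' : (π ^ (a.val - 1 + 1)) z0 = (π ^ (n - 1 + 1)) z0 := by
      rw [Nat.sub_add_cancel hpos, Nat.sub_add_cancel hn]; exact ha
    rw [pow_succ', pow_succ', Equiv.Perm.mul_apply, Equiv.Perm.mul_apply] at ha'
    have := π.injective ha'
    have := Stmt10Aux.pow_inj hn π hcyc (a.val - 1) (n - 1) (by omega) (by omega) this
    omega



/-- The "segment index" function on orbit times. -/
def gfun (n : ℕ) (z0 : Fin n) (π : Equiv.Perm (Fin n)) (c : Fin n → ℕ) (T : ℕ) : ℕ :=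
  if T % n ≤ c ((π ^ (T / n)) z0) then T / n else T / n + 1

end Stmt10Aux

/-- Single-cycle construction: if `π` is a single `n`-cycle, there exist words
`u', v'` of length `n²` that are cyclically equivalent with offset `n+1` and arise
from `u = 0 1 ⋯ (n-1)` and `v = π(0) ⋯ π(n-1)` by the same simultaneous insertion:
there are `n` distinguished positions `d 0 < d 1 < ⋯ < d (n-1)` carrying the
letters of `u` and `v` respectively, and `u'` and `v'` agree everywhere else. -/
theorem stmt_10 (n : ℕ) (hn : 1 ≤ n) (π : Equiv.Perm (Fin n))
    (hcyc : ∀ t : Fin n, ∃ k : ℕ, (π ^ k) ⟨0, hn⟩ = t) :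
    ∃ u' v' : ZMod (n ^ 2) → Fin n,
      (∀ j : ZMod (n ^ 2), v' j = u' (j + ((n + 1 : ℕ) : ZMod (n ^ 2)))) ∧
      ∃ d : Fin n → ZMod (n ^ 2),
        StrictMono (fun i => (d i).val) ∧
        (∀ i : Fin n, u' (d i) = i) ∧
        (∀ i : Fin n, v' (d i) = π i) ∧
        (∀ j : ZMod (n ^ 2), (∀ i : Fin n, j ≠ d i) → u' j = v' j) := by
  -- trivial case n = 1
  rcases eq_or_lt_of_le hn with h1 | h2
  · subst h1
    refine ⟨fun _ => ⟨0, hn⟩, fun _ => ⟨0, hn⟩, fun j => rfl, fun _ => 0, ?_, ?_, ?_,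
      fun j _ => rfl⟩
    · intro a b hab
      exact absurd (Subsingleton.elim a b) (ne_of_lt hab)
    · intro i; exact Subsingleton.elim _ _
    · intro i; exact Subsingleton.elim _ _
  set z0 : Fin n := ⟨0, hn⟩ with hz0
  have h2n : 2 ≤ n := h2
  haveI : NeZero (n ^ 2) := ⟨by positivity⟩
  haveI : Fact (1 < n ^ 2) := ⟨by nlinarith⟩
  -- discrete log
  set k : Fin n → ℕ := fun i => Nat.find (hcyc i) with hkdef
  have hk1 : ∀ i, (π ^ k i) z0 = i := fun i => Nat.find_spec (hcyc i)
  have hFinj : Function.Injective (fun m : Fin n => (π ^ (m : ℕ)) z0) := by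
    intro a b h
    exact Fin.val_injective (Stmt10Aux.pow_inj hn π hcyc a.val b.val a.isLt b.isLt h)
  have hFsurj := Finite.surjective_of_injective hFinj
  have hk2 : ∀ i, k i < n := by
    intro i
    obtain ⟨q, hq⟩ := hFsurj i
    have : k i ≤ q.val := Nat.find_min' (hcyc i) hq
    omega
  have hk3 : ∀ (i : Fin n) (q : ℕ), q < n → (π ^ q) z0 = i → q = k i := by
    intro i q hq hqi
    exact Stmt10Aux.pow_inj hn π hcyc q (k i) hq (hk2 i) (hqi.trans (hk1 i).symm)
  have hk0 : k z0 = 0 := (hk3 z0 0 (by omega) (by rw [pow_zero]; rfl)).symm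
  have hB : (π ^ n) z0 = z0 := Stmt10Aux.pow_n hn π hcyc
  -- insertion offsets
  set c : Fin n → ℕ := fun i => (i.val + n - k i) % n with hcdef
  have hc_lt : ∀ i, c i < n := fun i => Nat.mod_lt _ (by omega)
  have hck : ∀ i, (c i + k i) % n = i.val := by
    intro i
    have h := (Nat.mod_modEq (i.val + n - k i) n).add_right (k i)
    have h2 : (i.val + n - k i) + k i = i.val + n := by have := hk2 i; omega
    have h3 : (i.val + n) % n = i.val := by
      rw [Nat.add_mod_right]; exact Nat.mod_eq_of_lt i.isLt
    calc (c i + k i) % n = ((i.val + n - k i) + k i) % n := h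
      _ = (i.val + n) % n := by rw [h2]
      _ = i.val := h3
  have hc0 : c z0 = 0 := by
    show (z0.val + n - k z0) % n = 0
    rw [hk0]
    simp [hz0]
  -- ZMod machinery
  have hzsq : ((n : ZMod (n ^ 2))) ^ 2 = 0 := by
    rw [← Nat.cast_pow, ZMod.natCast_self]
  set inv : ZMod (n ^ 2) := ((n ^ 2 + 1 - n : ℕ) : ZMod (n ^ 2)) with hinvdef
  have hinv_cast : inv = 1 - (n : ZMod (n ^ 2)) := by
    rw [hinvdef, Nat.cast_sub (by nlinarith : n ≤ n ^ 2 + 1)]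
    push_cast
    rw [hzsq]
    ring
  have hone : ((n + 1 : ℕ) : ZMod (n ^ 2)) * inv = 1 := by
    rw [hinv_cast]
    push_cast
    linear_combination (-1 : ZMod (n ^ 2)) * hzsq
  set t : ZMod (n ^ 2) → ℕ := fun j => (j * inv).val with htdef
  have ht_lt : ∀ j, t j < n ^ 2 := fun j => ZMod.val_lt _
  have ht_inj : ∀ j j', t j = t j' → j = j' := by
    intro j j' h
    have h1 : j * inv = j' * inv := by
      have := congrArg (fun m : ℕ => (m : ZMod (n ^ 2))) h
      simpa [htdef, ZMod.natCast_val, ZMod.cast_id] using this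
    have h2 : ∀ x : ZMod (n ^ 2), x * inv * ((n + 1 : ℕ) : ZMod (n ^ 2)) = x := by
      intro x
      rw [mul_assoc, mul_comm inv, hone, mul_one]
    rw [← h2 j, ← h2 j', h1]
  have ht_shift : ∀ j, t (j + ((n + 1 : ℕ) : ZMod (n ^ 2))) = (t j + 1) % n ^ 2 := by
    intro j
    show ((j + _) * inv).val = _
    rw [add_mul, hone, ZMod.val_add, ZMod.val_one]
  -- distinguished positions
  set d : Fin n → ZMod (n ^ 2) := fun i => ((n * i.val + c i : ℕ) : ZMod (n ^ 2)) with hddef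
  have hd_lt : ∀ i : Fin n, n * i.val + c i < n ^ 2 := by
    intro i
    have h1 : i.val + 1 ≤ n := i.isLt
    have h2 := hc_lt i
    calc n * i.val + c i < n * i.val + n := by omega
      _ = n * (i.val + 1) := by ring
      _ ≤ n * n := Nat.mul_le_mul_left n h1
      _ = n ^ 2 := (sq n).symm
  have hd_val : ∀ i, (d i).val = n * i.val + c i := by
    intro i
    rw [hddef]
    exact ZMod.val_natCast_of_lt (hd_lt i)
  have ht_d : ∀ i, t (d i) = n * k i + c i := by
    intro i
    have hlt : n * k i + c i < n ^ 2 := by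
      have h1 : k i + 1 ≤ n := hk2 i
      have h2 := hc_lt i
      calc n * k i + c i < n * k i + n := by omega
        _ = n * (k i + 1) := by ring
        _ ≤ n * n := Nat.mul_le_mul_left n h1
        _ = n ^ 2 := (sq n).symm
    have heq : d i * inv = ((n * k i + c i : ℕ) : ZMod (n ^ 2)) := by
      rw [hddef, hinv_cast]
      have hq : (c i + k i : ℕ) = n * ((c i + k i) / n) + i.val := by
        conv_lhs => rw [← Nat.div_add_mod (c i + k i) n]
        rw [hck i]
      have hqc : ((c i : ZMod (n ^ 2)) + (k i : ZMod (n ^ 2)))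
          = (n : ZMod (n ^ 2)) * ((c i + k i) / n : ℕ) + (i.val : ZMod (n ^ 2)) := by
        exact_mod_cast congrArg (fun m : ℕ => (m : ZMod (n ^ 2))) hq
      push_cast
      linear_combination (-(i.val : ZMod (n ^ 2)) - ((c i + k i) / n : ℕ)) * hzsq
        + (-(n : ZMod (n ^ 2))) * hqc
    show (d i * inv).val = _
    rw [heq]
    exact ZMod.val_natCast_of_lt hlt
  -- the words
  set u' : ZMod (n ^ 2) → Fin n := fun j => (π ^ (Stmt10Aux.gfun n z0 π c (t j))) z0 with hu'def
  refine ⟨u', fun j => u' (j + ((n + 1 : ℕ) : ZMod (n ^ 2))), fun j => rfl, d, ?_, ?_, ?_, ?_⟩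
  · -- StrictMono
    intro a b hab
    have hab' : a.val < b.val := hab
    simp only [hd_val]
    have h1 : n * a.val + n ≤ n * b.val := by
      calc n * a.val + n = n * (a.val + 1) := by ring
        _ ≤ n * b.val := Nat.mul_le_mul_left n hab'
    have := hc_lt a
    omega
  · -- u' (d i) = i
    intro i
    show (π ^ (Stmt10Aux.gfun n z0 π c (t (d i)))) z0 = i
    rw [ht_d i]
    have hdiv : (n * k i + c i) / n = k i := by
      rw [Nat.mul_add_div (by omega), Nat.div_eq_of_lt (hc_lt i), Nat.add_zero]
    have hmod : (n * k i + c i) % n = c i := by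
      rw [Nat.mul_add_mod, Nat.mod_eq_of_lt (hc_lt i)]
    rw [Stmt10Aux.gfun, hdiv, hmod, hk1 i, if_pos le_rfl]
    exact hk1 i
  · -- v' (d i) = π i
    intro i
    simp only [hu'def]
    rw [ht_shift, ht_d]
    have hki := hk2 i
    have hci := hc_lt i
    have hnn : n * n = n ^ 2 := (sq n).symm
    have hstep : ∀ m : ℕ, (π ^ (m + 1)) z0 = π ((π ^ m) z0) := by
      intro m; rw [pow_succ', Equiv.Perm.mul_apply]
    by_cases hcase : c i + 1 = n
    · have hT1 : n * k i + c i + 1 = n * (k i + 1) := by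
        have : n * (k i + 1) = n * k i + n := by ring
        omega
      by_cases hk' : k i + 1 = n
      · have hmod : (n * k i + c i + 1) % n ^ 2 = 0 := by
          rw [hT1, hk', ← sq, Nat.mod_self]
        rw [hmod]
        have hg0 : Stmt10Aux.gfun n z0 π c 0 = 0 := by rw [Stmt10Aux.gfun]; simp
        rw [hg0, pow_zero]
        have hpi : π i = (π ^ (k i + 1)) z0 := by rw [hstep, hk1 i]
        rw [hpi, hk', hB]
        rfl
      · have hlt : n * (k i + 1) < n ^ 2 := by
          have h1 : k i + 1 < n := by omega
          calc n * (k i + 1) < n * n := by nlinarith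
            _ = n ^ 2 := hnn
        have hmod : (n * k i + c i + 1) % n ^ 2 = n * (k i + 1) := by
          rw [hT1]; exact Nat.mod_eq_of_lt hlt
        rw [hmod]
        have hdiv : n * (k i + 1) / n = k i + 1 := Nat.mul_div_cancel_left _ (by omega)
        have hm : n * (k i + 1) % n = 0 := Nat.mul_mod_right n _
        rw [Stmt10Aux.gfun, hdiv, hm, if_pos (Nat.zero_le _), hstep, hk1 i]
    · have hlt : n * k i + (c i + 1) < n ^ 2 := by
        calc n * k i + (c i + 1) < n * k i + n := by omega
          _ = n * (k i + 1) := by ring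
          _ ≤ n * n := Nat.mul_le_mul_left n hki
          _ = n ^ 2 := hnn
      have hmod : (n * k i + c i + 1) % n ^ 2 = n * k i + (c i + 1) := by
        rw [Nat.add_assoc]; exact Nat.mod_eq_of_lt hlt
      rw [hmod]
      have hdiv : (n * k i + (c i + 1)) / n = k i := by
        rw [Nat.mul_add_div (by omega), Nat.div_eq_of_lt (by omega), Nat.add_zero]
      have hm : (n * k i + (c i + 1)) % n = c i + 1 := by
        rw [Nat.mul_add_mod, Nat.mod_eq_of_lt (by omega)]
      rw [Stmt10Aux.gfun, hdiv, hm, hk1 i, if_neg (by omega), hstep, hk1 i]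
  · -- agreement off d
    intro j hj
    simp only [hu'def]
    rw [ht_shift]
    have hTne : ∀ i : Fin n, t j ≠ n * k i + c i := by
      intro i h
      exact hj i (ht_inj j (d i) (h.trans (ht_d i).symm))
    set T := t j with hT
    have hTlt : T < n ^ 2 := ht_lt j
    set q := T / n with hq
    set r := T % n with hr
    have hqr : n * q + r = T := Nat.div_add_mod T n
    have hrlt : r < n := Nat.mod_lt _ (by omega)
    have hnn : n * n = n ^ 2 := (sq n).symm
    have hqlt : q < n := by
      rw [hq]
      exact Nat.div_lt_of_lt_mul (by rw [hnn]; exact hTlt)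
    have hkey : r ≠ c ((π ^ q) z0) := by
      intro h
      have hkq : q = k ((π ^ q) z0) := hk3 _ q hqlt rfl
      exact hTne ((π ^ q) z0) (by rw [← hkq, ← h]; omega)
    have hstep : ∀ m : ℕ, (π ^ (m + 1)) z0 = π ((π ^ m) z0) := by
      intro m; rw [pow_succ', Equiv.Perm.mul_apply]
    by_cases hr1 : r + 1 < n
    · have hlt : T + 1 < n ^ 2 := by
        have h1 : n * q + n ≤ n * n := by
          calc n * q + n = n * (q + 1) := by ring
            _ ≤ n * n := Nat.mul_le_mul_left n hqlt
        omega
      have hmod2 : (T + 1) % n ^ 2 = T + 1 := Nat.mod_eq_of_lt hlt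
      have hT1 : T + 1 = n * q + (r + 1) := by omega
      have hdiv : (T + 1) / n = q := by
        rw [hT1, Nat.mul_add_div (by omega), Nat.div_eq_of_lt hr1, Nat.add_zero]
      have hm : (T + 1) % n = r + 1 := by
        rw [hT1, Nat.mul_add_mod, Nat.mod_eq_of_lt hr1]
      rw [hmod2, Stmt10Aux.gfun, Stmt10Aux.gfun, hdiv, hm, ← hq, ← hr]
      by_cases hle : r ≤ c ((π ^ q) z0)
      · rw [if_pos hle, if_pos (by omega : r + 1 ≤ c ((π ^ q) z0))]
      · rw [if_neg hle, if_neg (by omega : ¬ (r + 1 ≤ c ((π ^ q) z0)))]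
    · have hr' : r = n - 1 := by omega
      have hckey : c ((π ^ q) z0) < r := by have := hc_lt ((π ^ q) z0); omega
      have hgT : Stmt10Aux.gfun n z0 π c T = q + 1 := by
        rw [Stmt10Aux.gfun, ← hq, ← hr, if_neg (by omega)]
      have hT1 : T + 1 = n * (q + 1) := by
        have : n * (q + 1) = n * q + n := by ring
        omega
      by_cases hq1 : q + 1 < n
      · have hlt : T + 1 < n ^ 2 := by
          rw [hT1]
          calc n * (q + 1) < n * n := by nlinarith
            _ = n ^ 2 := hnn
        have hmod2 : (T + 1) % n ^ 2 = T + 1 := Nat.mod_eq_of_lt hlt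
        have hdiv : (T + 1) / n = q + 1 := by
          rw [hT1]; exact Nat.mul_div_cancel_left _ (by omega)
        have hm : (T + 1) % n = 0 := by rw [hT1]; exact Nat.mul_mod_right n _
        rw [hmod2, hgT, Stmt10Aux.gfun, hdiv, hm, if_pos (Nat.zero_le _)]
      · have hq' : q + 1 = n := by omega
        have hmod2 : (T + 1) % n ^ 2 = 0 := by rw [hT1, hq', ← sq, Nat.mod_self]
        rw [hmod2, hgT, hq']
        have hg0 : Stmt10Aux.gfun n z0 π c 0 = 0 := by rw [Stmt10Aux.gfun]; simp
        rw [hg0, pow_zero, hB]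
        rfl
end

section
/- Cyclic equalizability is invariant under simultaneous insertion: if u', v' are obtained from equal-length words u, v by a simultaneous insertion, then u and v are cyclically equalizable if and only if u' and v' are cyclically equalizable. -/
open List hiding interleave

theorem List.IsRotated.flatMap {α β : Type*} {l l' : List α} (h : l ~r l') (f : α → List β) :
    l.flatMap f ~r l'.flatMap f := by
  obtain ⟨n, hn, rfl⟩ := isRotated_iff_mod.1 h
  rw [rotate_eq_drop_append_take hn, flatMap_append]
  conv_lhs => rw [← take_append_drop n l, flatMap_append]
  exact isRotated_append

section

variable {α : Type*}

theorem interleave_append_cons : ∀ {D₁ : List (List α)} {s : List α}, D₁.length = s.length + 1 →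
    ∀ (D₂ : List (List α)) (a : α) (w : List α),
      interleave (D₁ ++ D₂) (s ++ a :: w) = interleave D₁ s ++ a :: interleave D₂ w
  | [_], [], _, _, _, _ => by simp [interleave]
  | _ :: D₁, _ :: s, h, D₂, a, w => by
    simp [interleave, interleave_append_cons (D₁ := D₁) (s := s) (by simpa using h)]
  | _ :: _ :: _, [], h, _, _, _ => by simp at h

theorem length_interleave_add_one : ∀ {ss : List (List α)} {w : List α},
    ss.length = w.length + 1 → (interleave ss w).length + 1 = (ss.map (·.length + 1)).sum
  | [_], [], _ => by simp [interleave]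
  | _ :: ss, _ :: w, h => by
    have := length_interleave_add_one (ss := ss) (w := w) (by simpa using h)
    simp only [interleave, length_append, length_cons, map_cons, sum_cons] at this ⊢
    omega
  | _ :: _ :: _, [], h => by simp at h

theorem interleave_flatten : ∀ {Ds : List (List (List α))} {ss : List (List α)} {w : List α},
    Ds.map length = ss.map (·.length + 1) → ss.length = w.length + 1 →
    interleave Ds.flatten (interleave ss w) = interleave (zipWith interleave Ds ss) w
  | [_], [_], [], _, _ => by simp [interleave]
  | _ :: Ds, _ :: ss, _ :: w, hDs, hss => by
    simp only [map_cons, cons.injEq] at hDs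
    rw [flatten_cons, interleave, interleave_append_cons hDs.1,
      interleave_flatten hDs.2 (by simpa using hss)]
    rfl
  | _, _ :: _ :: _, [], _, hss => by simp at hss
  | _ :: _ :: _, [_], [], hDs, _ => by simp at hDs

/-- `D` is cut into consecutive blocks of `|sᵢ| + 1` strings, the `i`-th block being inserted
into `sᵢ`. -/
def composeFillers (D ss : List (List α)) : List (List α) :=
  zipWith interleave ((ss.map (·.length + 1)).splitLengths D) ss

theorem interleave_interleave {D ss : List (List α)} {w : List α} (hss : ss.length = w.length + 1)
    (hD : D.length = (interleave ss w).length + 1) :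
    interleave D (interleave ss w) = interleave (composeFillers D ss) w := by
  have hsum : D.length = (ss.map (·.length + 1)).sum := hD.trans (length_interleave_add_one hss)
  conv_lhs => rw [← flatten_splitLengths D _ hsum.le]
  exact interleave_flatten (map_splitLengths_length D _ hsum.ge) hss

theorem exists_interleave_eq_of_sublist {s r : List α} (h : s <+ r) :
    ∃ D : List (List α), D.length = s.length + 1 ∧ interleave D s = r := by
  induction h with
  | slnil => exact ⟨[[]], rfl, rfl⟩
  | @cons s r a _ ih =>
    obtain ⟨_ | ⟨d, D⟩, hD, rfl⟩ := ih
    · simp at hD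
    · exact ⟨(a :: d) :: D, by simpa using hD, by cases s <;> rfl⟩
  | cons_cons a _ ih =>
    obtain ⟨D, hD, rfl⟩ := ih
    exact ⟨[] :: D, by simpa using hD, rfl⟩

theorem exists_zipWith_interleave_eq {ss rs : List (List α)} (h : Forall₂ Sublist ss rs) :
    ∃ Ds : List (List (List α)), Ds.map length = ss.map (·.length + 1) ∧
      zipWith interleave Ds ss = rs := by
  induction h with
  | nil => exact ⟨[], rfl, rfl⟩
  | cons hsr _ ih =>
    obtain ⟨D, hD, rfl⟩ := exists_interleave_eq_of_sublist hsr
    obtain ⟨Ds, hDs, rfl⟩ := ih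
    exact ⟨D :: Ds, by simp [hD, hDs], rfl⟩

def pad (F : List α) (x : α) : List α := F ++ x :: F

def padFillers (F : List α) : List (List α) → List (List α)
  | [] => []
  | [t] => [F ++ t.flatMap (pad F)]
  | t :: ts => (F ++ t.flatMap (pad F) ++ F) :: padFillers F ts

theorem prefix_of_mem_padFillers {F : List α} : ∀ {ts : List (List α)} {r : List α},
    r ∈ padFillers F ts → F <+: r
  | [], _, h => by simp [padFillers] at h
  | [_], _, h => by simp_all [padFillers]
  | _ :: _ :: _, _, h => by
    simp only [padFillers, mem_cons] at h
    rcases h with rfl | h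
    · exact prefix_append_of_prefix (prefix_append _ _)
    · exact prefix_of_mem_padFillers h

theorem length_padFillers (F : List α) : ∀ ts : List (List α), (padFillers F ts).length = ts.length
  | [] | [_] => rfl
  | _ :: t :: ts => by simp [padFillers, length_padFillers F (t :: ts)]

theorem append_flatMap_pad_interleave (F : List α) : ∀ {ts : List (List α)} {w : List α},
    ts.length = w.length + 1 → F ++ (interleave ts w).flatMap (pad F) = interleave (padFillers F ts) w
  | [_], [], _ => by simp [interleave, padFillers]
  | t :: t' :: ts, a :: w, h => by
    have := append_flatMap_pad_interleave F (ts := t' :: ts) (w := w) (by simpa using h)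
    simp only [interleave, padFillers, flatMap_append, flatMap_cons, pad] at this ⊢
    simp [← this]

theorem CyclicallyEqualizable.refl (w : List α) : CyclicallyEqualizable w w :=
  ⟨replicate (w.length + 1) [], length_replicate, IsRotated.refl _⟩

theorem CyclicallyEqualizable.of_interleave {u v : List α} {ss : List (List α)}
    (hlen : u.length = v.length) (hss : ss.length = u.length + 1)
    (h : CyclicallyEqualizable (interleave ss u) (interleave ss v)) :
    CyclicallyEqualizable u v := by
  obtain ⟨D, hD, hrot⟩ := h
  have hss' : ss.length = v.length + 1 := hlen ▸ hss
  have hDv : D.length = (interleave ss v).length + 1 := by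
    rw [hD, length_interleave_add_one hss, length_interleave_add_one hss']
  refine ⟨composeFillers D ss, by simp [composeFillers, hss], ?_⟩
  rwa [← interleave_interleave hss hD, ← interleave_interleave hss' hDv]

theorem CyclicallyEqualizable.interleave {u v : List α} {ss : List (List α)}
    (hlen : u.length = v.length) (hss : ss.length = u.length + 1)
    (h : CyclicallyEqualizable u v) :
    CyclicallyEqualizable (interleave ss u) (interleave ss v) := by
  obtain ⟨_ | ⟨t, ts⟩, hts, hrot⟩ := h
  · simp at hts
  obtain ⟨⟩ | ⟨a, u⟩ := u
  · obtain rfl : v = [] := length_eq_zero_iff.1 hlen.symm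
    exact .refl _
  obtain ⟨⟩ | ⟨b, v⟩ := v
  · simp at hlen
  set F := ss.flatten
  set rs := (t.flatMap (pad F) ++ F) :: padFillers F ts
  have hflat : ∀ {c : α} {x : List α}, x.length = u.length →
      (_root_.interleave (t :: ts) (c :: x)).flatMap (pad F) = _root_.interleave rs (c :: x) := by
    intro c x hx
    rw [_root_.interleave, flatMap_append, flatMap_cons, pad, append_assoc, cons_append,
      append_flatMap_pad_interleave F (by simpa [hx] using hts)]
    simp [rs, _root_.interleave]
  have hsub : Forall₂ Sublist ss rs := by
    refine forall₂_iff_zip.2 ⟨by simpa [rs, length_padFillers] using hss.trans hts.symm, ?_⟩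
    intro s r hsr
    have hsF : s <+ F := sublist_flatten_of_mem (of_mem_zip hsr).1
    rcases mem_cons.1 (of_mem_zip hsr).2 with rfl | hr
    · exact hsF.trans (sublist_append_right _ _)
    · exact hsF.trans (prefix_of_mem_padFillers hr).sublist
  obtain ⟨Ds, hDs, hrs⟩ := exists_zipWith_interleave_eq hsub
  refine ⟨Ds.flatten, ?_, ?_⟩
  · rw [length_flatten, hDs, length_interleave_add_one hss]
  · rw [interleave_flatten hDs hss, interleave_flatten hDs (hlen ▸ hss), hrs,
      ← hflat rfl, ← hflat (by simpa using hlen.symm)]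
    exact hrot.flatMap _

end

/-- Cyclic equalizability is invariant under simultaneous insertion. -/
theorem stmt_13 {α : Type*} (u v : List α) (hlen : u.length = v.length)
    (ss : List (List α)) (hss : ss.length = u.length + 1)
    (u' v' : List α) (hu' : u' = interleave ss u) (hv' : v' = interleave ss v) :
    CyclicallyEqualizable u v ↔ CyclicallyEqualizable u' v' := by
  subst hu' hv'
  exact ⟨.interleave hlen hss, .of_interleave hlen hss⟩
end

section
/- Fix n ≥ 1 and p = n+1, and let f : (ZMod n)² → ZMod (n²) be the position map f(t,g) = (n+1)(gn + i) mod n², where i is the representative of t − g in {0,…,n−1}. Then for all t, g, the block index of f(t,g) is t, i.e., ⌊f(t,g)/n⌋ ≡ t (mod n), taking the canonical representative of f(t,g) in {0,…,n²−1}. -/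
/-! Since `(n + 1)(a n + i) = n (a n + a + i) + i` with `0 ≤ i < n`, the quotient by `n`
of its residue mod `n²` is `a + i` mod `n`; with `a = g` and `i ≡ t - g` this is `t`. -/

theorem Nat.add_one_mul_mul_add_mod_sq_div {n a i : ℕ} (hi : i < n) :
    (n + 1) * (a * n + i) % n ^ 2 / n = (a + i) % n := by
  have hn : 0 < n := by omega
  have hexpand : (n + 1) * (a * n + i) = i + n * (n * a + (a + i)) := by ring
  rw [sq, Nat.mod_mul_right_div_self, hexpand, Nat.add_mul_div_left _ _ hn,
    Nat.div_eq_of_lt hi, zero_add, Nat.mul_add_mod]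

/-- The position `f(t,g) = (n+1)(g·n + i) mod n²`, with `i` the representative of
`t - g` in `{0,…,n-1}`, lies in Block `t`: its quotient upon division by `n` is
congruent to `t` mod `n`. -/
theorem stmt_14 (n : ℕ) (hn : 1 ≤ n) (t g : ZMod n) :
    ((((((n + 1) * (g.val * n + (t - g).val) : ℕ) : ZMod (n ^ 2)).val / n : ℕ) : ZMod n)) = t := by
  have : NeZero n := ⟨by omega⟩
  rw [ZMod.val_natCast, Nat.add_one_mul_mul_add_mod_sq_div (ZMod.val_lt _), ZMod.natCast_mod,
    Nat.cast_add, ZMod.natCast_zmod_val, ZMod.natCast_zmod_val, add_sub_cancel]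
end
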